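/- arXiv:1408.5122 — 4 statements merged into one kernel-verified Lean document; each statement's English description precedes it below -/
import Mathlib

section
/- Let (S^n, q^n) be a sequence of finite sets with nonnegative voting rates such that |S^n| → ∞ and sup_n qmax^n < ∞, and suppose there is a constant C such that for each n there exists a stationary distribution π^n for (S^n, q^n) with (max_x π^n(x))/(min_x π^n(x)) ≤ C. Let 𝟏 denote the all-ones configuration. Then lim_{α→∞} liminf_{n→∞} ‖μ^{n,𝟏}_{(1/2)log|S^n| − α} − μ^n_∞‖_TV = 1. -/
open scoped BigOperators

/-- The generator of a spin system on `{0,1}^V` given flip rates `r η x`. -/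
noncomputable def genOfRate {V : Type} [Fintype V] [DecidableEq V]
    (r : (V → Bool) → V → ℝ) : Matrix (V → Bool) (V → Bool) ℝ :=
  fun η ξ =>
    (∑ x, if ξ = Function.update η x (!η x) then r η x else 0)
      - (if ξ = η then ∑ x, r η x else 0)

/-- Flip rate of the noisy voter model with voting rates `q`. -/
noncomputable def voterRate {V : Type} [Fintype V] [DecidableEq V]
    (q : V → V → ℝ) (η : V → Bool) (x : V) : ℝ :=
  1 / 2 + ∑ y ∈ Finset.univ.filter (fun y => y ≠ x), q x y * (if η y ≠ η x then 1 else 0)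

/-- Generator of the noisy voter model. -/
noncomputable def voterGen {V : Type} [Fintype V] [DecidableEq V]
    (q : V → V → ℝ) : Matrix (V → Bool) (V → Bool) ℝ :=
  genOfRate (voterRate q)

/-- Transition semigroup `P^t = exp (t Q)` of the noisy voter model. -/
noncomputable def voterP {V : Type} [Fintype V] [DecidableEq V]
    (q : V → V → ℝ) (t : ℝ) : Matrix (V → Bool) (V → Bool) ℝ :=
  NormedSpace.exp (t • voterGen q)

/-- Total variation distance between two vectors on a finite set. -/
noncomputable def tvDist {Ω : Type} [Fintype Ω] (m1 m2 : Ω → ℝ) : ℝ :=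
  (1 / 2) * ∑ s, |m1 s - m2 s|

/-- `π` is a stationary distribution for the continuous-time Markov chain `(S, q)`. -/
def IsStationaryChain {V : Type} [Fintype V] [DecidableEq V]
    (q : V → V → ℝ) (π : V → ℝ) : Prop :=
  (∀ x, 0 ≤ π x) ∧ (∑ x, π x = 1) ∧
    ∀ y, ∑ x ∈ Finset.univ.filter (fun x => x ≠ y), π x * q x y
        = π y * ∑ z ∈ Finset.univ.filter (fun z => z ≠ y), q y z

/-- `μ` is a stationary distribution for the noisy voter model with rates `q`. -/
def IsStationaryNVM {V : Type} [Fintype V] [DecidableEq V]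
    (q : V → V → ℝ) (μ : (V → Bool) → ℝ) : Prop :=
  (∀ η, 0 ≤ μ η) ∧ (∑ η, μ η = 1) ∧ ∀ ξ, ∑ η, μ η * voterGen q η ξ = 0

/-!
Wilson's method with the `π`-weighted magnetization `W η = ∑ₓ π x · (±1)`. Because `π` is
stationary for `(S, q)`, the voting moves cancel in `W`, which is therefore an eigenfunction of the
generator with eigenvalue `-1`: started from `𝟏`, its mean at time `T` is `e^{-T}`. The generator
sends `W²` to `-2 W²` plus a noise term bounded by `K = (2 + 4 qmax) ∑ π²`, so by Grönwall the
law at time `T` and the stationary law both give `W` variance at most `K / 2`. Chebyshev at the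
threshold `e^{-T} / 2` yields `‖μ_T - μ_∞‖_TV ≥ 1 - 4 K e^{2T}`. Almost uniformity of `π` gives
`∑ π² ≤ C / |S|`, so at `T = ½ log |S| - α` the bound is `1 - O(e^{-2α})`.
-/

open Finset Matrix Filter Topology

namespace Matrix
variable {ι : Type*} [Fintype ι]

theorem dotProduct_le_mul_dotProduct_add {p G F : ι → ℝ} {a ε : ℝ} (hp : ∀ i, 0 ≤ p i)
    (hp1 : ∑ i, p i = 1) (hG : ∀ i, G i ≤ a * F i + ε) : p ⬝ᵥ G ≤ a * (p ⬝ᵥ F) + ε := by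
  calc p ⬝ᵥ G ≤ p ⬝ᵥ (fun i => a * F i + ε) :=
        dotProduct_le_dotProduct_of_nonneg_left hG hp
    _ = a * (p ⬝ᵥ F) + ε := by
        simp only [dotProduct, mul_add, sum_add_distrib, ← sum_mul, hp1, one_mul, mul_sum,
          mul_left_comm]

theorem zero_le_mul_dotProduct_add_of_vecMul_eq_zero {Q : Matrix ι ι ℝ} {μ F : ι → ℝ} {a ε : ℝ}
    (hμ : ∀ i, 0 ≤ μ i) (hμ1 : ∑ i, μ i = 1) (hμQ : μ ᵥ* Q = 0)
    (hF : ∀ i, (Q *ᵥ F) i ≤ a * F i + ε) : 0 ≤ a * (μ ⬝ᵥ F) + ε := by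
  calc (0 : ℝ) = μ ⬝ᵥ (Q *ᵥ F) := by rw [dotProduct_mulVec, hμQ, zero_dotProduct]
    _ ≤ a * (μ ⬝ᵥ F) + ε := dotProduct_le_mul_dotProduct_add hμ hμ1 hF

structure IsRateMatrix (Q : Matrix ι ι ℝ) : Prop where
  apply_nonneg_of_ne : ∀ i j, i ≠ j → 0 ≤ Q i j
  mulVec_one : Q *ᵥ (fun _ => 1) = 0

theorem IsRateMatrix.smul {Q : Matrix ι ι ℝ} (hQ : IsRateMatrix Q) {t : ℝ} (ht : 0 ≤ t) :
    IsRateMatrix (t • Q) where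
  apply_nonneg_of_ne i j hij := mul_nonneg ht (hQ.apply_nonneg_of_ne i j hij)
  mulVec_one := by rw [smul_mulVec, hQ.mulVec_one, smul_zero]

variable [DecidableEq ι]

section Exponential
attribute [local instance] Matrix.linftyOpNormedRing Matrix.linftyOpNormedAlgebra

theorem hasSum_exp_apply (A : Matrix ι ι ℝ) (i j : ι) :
    HasSum (fun n : ℕ => (n.factorial : ℝ)⁻¹ * (A ^ n) i j) (NormedSpace.exp A i j) :=
  Pi.hasSum.mp (Pi.hasSum.mp (NormedSpace.exp_series_hasSum_exp' (𝕂 := ℝ) A) i) j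

theorem hasSum_exp_mulVec (A : Matrix ι ι ℝ) (f : ι → ℝ) :
    HasSum (fun n : ℕ => (n.factorial : ℝ)⁻¹ • (A ^ n *ᵥ f)) (NormedSpace.exp A *ᵥ f) := by
  refine Pi.hasSum.mpr fun i => ?_
  simp only [Pi.smul_apply, mulVec, dotProduct, smul_eq_mul, mul_sum, ← mul_assoc]
  exact hasSum_sum fun j _ => (hasSum_exp_apply A i j).mul_right (f j)

theorem exp_mulVec_of_mulVec_eq_smul {A : Matrix ι ι ℝ} {f : ι → ℝ} {c : ℝ}
    (h : A *ᵥ f = c • f) : NormedSpace.exp A *ᵥ f = Real.exp c • f := by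
  have hpow : ∀ n : ℕ, A ^ n *ᵥ f = c ^ n • f := by
    intro n
    induction n with
    | zero => simp
    | succ n ih => rw [pow_succ', ← mulVec_mulVec, ih, mulVec_smul, h, smul_smul, pow_succ]
  refine (hasSum_exp_mulVec A f).unique ?_
  simp only [hpow, smul_smul]
  rw [Real.exp_eq_exp_ℝ]
  exact (NormedSpace.exp_series_hasSum_exp' (𝕂 := ℝ) c).smul_const f

theorem exp_apply_nonneg_of_nonneg {A : Matrix ι ι ℝ} (h : ∀ i j, 0 ≤ A i j) (i j : ι) :
    0 ≤ NormedSpace.exp A i j := by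
  have hpow : ∀ n : ℕ, ∀ i j, 0 ≤ (A ^ n) i j := by
    intro n
    induction n with
    | zero => intro i j; by_cases hij : i = j <;> simp [hij]
    | succ n ih =>
      intro i j
      rw [pow_succ, mul_apply]
      exact sum_nonneg fun k _ => mul_nonneg (ih i k) (h k j)
  exact (hasSum_exp_apply A i j).nonneg fun n => mul_nonneg (by positivity) (hpow n i j)

theorem exp_apply_nonneg_of_apply_nonneg_of_ne {A : Matrix ι ι ℝ}
    (h : ∀ i j, i ≠ j → 0 ≤ A i j) (i j : ι) : 0 ≤ NormedSpace.exp A i j := by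
  -- shifting by a large enough multiple of `1` makes `A` entrywise nonnegative
  set c : ℝ := ∑ k, |A k k|
  have hB : ∀ i j, 0 ≤ (A + c • 1) i j := by
    intro i j
    rcases eq_or_ne i j with rfl | hij
    · have : |A i i| ≤ c :=
        single_le_sum (f := fun k => |A k k|) (fun k _ => abs_nonneg _) (mem_univ i)
      simp only [add_apply, smul_apply, one_apply_eq, smul_eq_mul, mul_one]
      linarith [neg_abs_le (A i i)]
    · simpa [one_apply_ne hij] using h i j hij
  have hscalar : NormedSpace.exp ((-c) • (1 : Matrix ι ι ℝ)) = Real.exp (-c) • 1 := by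
    rw [Real.exp_eq_exp_ℝ, ← Algebra.algebraMap_eq_smul_one, ← Algebra.algebraMap_eq_smul_one]
    exact (NormedSpace.algebraMap_exp_comm (-c)).symm
  have hsplit : NormedSpace.exp A = Real.exp (-c) • NormedSpace.exp (A + c • 1) := by
    calc NormedSpace.exp A = NormedSpace.exp ((-c) • 1 + (A + c • 1)) := by
          rw [neg_smul, add_comm A, neg_add_cancel_left]
      _ = NormedSpace.exp ((-c) • (1 : Matrix ι ι ℝ)) * NormedSpace.exp (A + c • 1) :=
        exp_add_of_commute _ _ ((Commute.one_left _).smul_left _)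
      _ = Real.exp (-c) • NormedSpace.exp (A + c • 1) := by rw [hscalar, smul_one_mul]
  rw [hsplit, smul_apply, smul_eq_mul]
  exact mul_nonneg (Real.exp_nonneg _) (exp_apply_nonneg_of_nonneg hB i j)

theorem hasDerivAt_exp_smul_mulVec_apply (A : Matrix ι ι ℝ) (f : ι → ℝ) (i : ι) (t : ℝ) :
    HasDerivAt (fun s : ℝ => (NormedSpace.exp (s • A) *ᵥ f) i)
      ((NormedSpace.exp (t • A) *ᵥ (A *ᵥ f)) i) t := by
  have hentry : ∀ j, HasDerivAt (fun s : ℝ => NormedSpace.exp (s • A) i j)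
      ((NormedSpace.exp (t • A) * A) i j) t := fun j =>
    hasDerivAt_pi.mp (hasDerivAt_pi.mp (hasDerivAt_exp_smul_const (𝕂 := ℝ) A t) i) j
  rw [mulVec_mulVec]
  exact HasDerivAt.fun_sum fun j _ => (hentry j).mul_const (f j)

end Exponential

namespace IsRateMatrix
variable {Q : Matrix ι ι ℝ}

theorem exp_apply_nonneg (hQ : IsRateMatrix Q) (i j : ι) : 0 ≤ NormedSpace.exp Q i j :=
  exp_apply_nonneg_of_apply_nonneg_of_ne hQ.apply_nonneg_of_ne i j

theorem sum_exp_apply (hQ : IsRateMatrix Q) (i : ι) : ∑ j, NormedSpace.exp Q i j = 1 := by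
  have h : Q *ᵥ (fun _ => 1) = (0 : ℝ) • fun _ => 1 := by rw [hQ.mulVec_one, zero_smul]
  simpa [mulVec, dotProduct] using congrFun (exp_mulVec_of_mulVec_eq_smul h) i

/-- The derivative `(exp (t • Q) *ᵥ Q *ᵥ F) i` is an average of `Q *ᵥ F`, since the rows of
`exp (t • Q)` are probability vectors. -/
theorem exp_smul_mulVec_le_gronwallBound (hQ : IsRateMatrix Q) {F : ι → ℝ} {a ε : ℝ}
    (hF : ∀ i, (Q *ᵥ F) i ≤ a * F i + ε) {t : ℝ} (ht : 0 ≤ t) (i : ι) :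
    (NormedSpace.exp (t • Q) *ᵥ F) i ≤ gronwallBound (F i) a ε t := by
  have hderiv := hasDerivAt_exp_smul_mulVec_apply Q F i
  have hbound : ∀ s ∈ Set.Ico 0 t,
      (NormedSpace.exp (s • Q) *ᵥ (Q *ᵥ F)) i ≤ a * (NormedSpace.exp (s • Q) *ᵥ F) i + ε :=
    fun s hs => dotProduct_le_mul_dotProduct_add ((hQ.smul hs.1).exp_apply_nonneg i)
      ((hQ.smul hs.1).sum_exp_apply i) hF
  simpa using le_gronwallBound_of_liminf_deriv_right_le
    (fun s _ => (hderiv s).continuousAt.continuousWithinAt)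
    (fun s _ _ hr => (hderiv s).hasDerivWithinAt.liminf_right_slope_le hr)
    (by simp) hbound t ⟨ht, le_rfl⟩

end IsRateMatrix
end Matrix

section TotalVariation
variable {Ω : Type} [Fintype Ω]

theorem sum_sub_sum_le_tvDist {m₁ m₂ : Ω → ℝ} (h : ∑ s, m₁ s = ∑ s, m₂ s) (A : Finset Ω) :
    ∑ s ∈ A, m₁ s - ∑ s ∈ A, m₂ s ≤ tvDist m₁ m₂ := by
  classical
  have hcompl : ∑ s ∈ A, (m₁ s - m₂ s) = -∑ s ∈ Aᶜ, (m₁ s - m₂ s) := by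
    rw [eq_neg_iff_add_eq_zero, sum_add_sum_compl, sum_sub_distrib, h, sub_self]
  have hA : ∑ s ∈ A, (m₁ s - m₂ s) ≤ ∑ s ∈ A, |m₁ s - m₂ s| :=
    sum_le_sum fun s _ => le_abs_self _
  have hAc : -∑ s ∈ Aᶜ, (m₁ s - m₂ s) ≤ ∑ s ∈ Aᶜ, |m₁ s - m₂ s| := by
    rw [← sum_neg_distrib]
    exact sum_le_sum fun s _ => neg_le_abs _
  have htotal := sum_add_sum_compl A fun s => |m₁ s - m₂ s|
  rw [tvDist, ← sum_sub_distrib]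
  linarith

theorem tvDist_le_one {m₁ m₂ : Ω → ℝ} (h₁ : ∀ s, 0 ≤ m₁ s) (hs₁ : ∑ s, m₁ s = 1)
    (h₂ : ∀ s, 0 ≤ m₂ s) (hs₂ : ∑ s, m₂ s = 1) : tvDist m₁ m₂ ≤ 1 := by
  have : ∑ s, |m₁ s - m₂ s| ≤ ∑ s, (m₁ s + m₂ s) := sum_le_sum fun s _ =>
    abs_sub_le_iff.mpr ⟨by linarith [h₂ s], by linarith [h₁ s]⟩
  rw [sum_add_distrib, hs₁, hs₂] at this
  rw [tvDist]
  linarith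

theorem sq_mul_sum_le_sum_mul_sq {ν f : Ω → ℝ} (hν : ∀ s, 0 ≤ ν s) {a : ℝ} (ha : 0 ≤ a)
    {A : Finset Ω} (hA : ∀ s ∈ A, a ≤ |f s|) : a ^ 2 * ∑ s ∈ A, ν s ≤ ∑ s, ν s * f s ^ 2 := by
  calc a ^ 2 * ∑ s ∈ A, ν s = ∑ s ∈ A, ν s * a ^ 2 := by rw [mul_sum]; simp only [mul_comm]
    _ ≤ ∑ s ∈ A, ν s * f s ^ 2 := sum_le_sum fun s hs => mul_le_mul_of_nonneg_left
        (by simpa only [sq_abs] using pow_le_pow_left₀ ha (hA s hs) 2) (hν s)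
    _ ≤ ∑ s, ν s * f s ^ 2 := sum_le_sum_of_subset_of_nonneg (subset_univ _)
        fun s _ _ => mul_nonneg (hν s) (sq_nonneg _)

theorem one_sub_le_tvDist_of_moments {ν μ W : Ω → ℝ} (hν : ∀ s, 0 ≤ ν s) (hν1 : ∑ s, ν s = 1)
    (hμ : ∀ s, 0 ≤ μ s) (hμ1 : ∑ s, μ s = 1) {m v : ℝ} (hm : 0 < m)
    (hνW : ∑ s, ν s * (W s - m) ^ 2 ≤ v) (hμW : ∑ s, μ s * W s ^ 2 ≤ v) :
    1 - 8 * v / m ^ 2 ≤ tvDist ν μ := by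
  classical
  set A := univ.filter fun s => m / 2 ≤ W s
  have hνAc : (m / 2) ^ 2 * ∑ s ∈ Aᶜ, ν s ≤ v := by
    refine (sq_mul_sum_le_sum_mul_sq hν (by positivity) fun s hs => ?_).trans hνW
    simp only [A, mem_compl, mem_filter, mem_univ, true_and, not_le] at hs
    rw [abs_sub_comm, abs_of_pos (by linarith)]
    linarith
  have hμA : (m / 2) ^ 2 * ∑ s ∈ A, μ s ≤ v := by
    refine (sq_mul_sum_le_sum_mul_sq hμ (by positivity) fun s hs => ?_).trans hμW
    simp only [A, mem_filter, mem_univ, true_and] at hs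
    exact hs.trans (le_abs_self _)
  have hνA : ∑ s ∈ A, ν s + ∑ s ∈ Aᶜ, ν s = 1 := by rw [sum_add_sum_compl, hν1]
  have htv := sum_sub_sum_le_tvDist (hν1.trans hμ1.symm) A
  have hsum : ∑ s ∈ Aᶜ, ν s + ∑ s ∈ A, μ s ≤ 8 * v / m ^ 2 := by
    rw [le_div_iff₀ (by positivity)]
    linear_combination 4 * hνAc + 4 * hμA
  linarith

end TotalVariation

theorem Filter.tendsto_liminf_of_forall_eventually_le {ι β : Type*} {F : Filter ι} [F.NeBot]
    {l : Filter β} {u : β → ι → ℝ} {g : β → ℝ} {a : ℝ} (hg : Tendsto g l (𝓝 a))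
    (hu : ∀ b, ∀ᶠ n in F, g b ≤ u b n ∧ u b n ≤ a) :
    Tendsto (fun b => liminf (u b) F) l (𝓝 a) := by
  have hlow : ∀ b, g b ≤ liminf (u b) F := fun b =>
    le_liminf_of_le (isCoboundedUnder_ge_of_eventually_le F ((hu b).mono fun _ h => h.2))
      ((hu b).mono fun _ h => h.1)
  have hup : ∀ b, liminf (u b) F ≤ a := fun b =>
    liminf_le_of_frequently_le ((hu b).mono fun _ h => h.2).frequently
      ⟨g b, eventually_map.mpr ((hu b).mono fun _ h => h.1)⟩
  exact tendsto_of_tendsto_of_tendsto_of_le_of_le hg tendsto_const_nhds hlow hup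

theorem sum_sq_le_div_card {V : Type} [Fintype V] [Nonempty V] {π : V → ℝ}
    (hπ1 : ∑ x, π x = 1) (hpos : ∀ x, 0 < π x) {C : ℝ} (hC : (⨆ x, π x) / (⨅ x, π x) ≤ C) :
    ∑ x, π x ^ 2 ≤ C / Fintype.card V := by
  have hmin : ∀ x, (⨅ y, π y) ≤ π x := ciInf_le (Set.finite_range π).bddBelow
  have hmax : ∀ x, π x ≤ ⨆ y, π y := le_ciSup (Set.finite_range π).bddAbove
  obtain ⟨x₀, hx₀⟩ := exists_eq_ciInf_of_finite (f := π)
  have hminpos : 0 < ⨅ y, π y := hx₀ ▸ hpos x₀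
  have hC0 : 0 ≤ C := (div_nonneg ((hpos x₀).le.trans (hmax x₀)) hminpos.le).trans hC
  have hcard : 0 < (Fintype.card V : ℝ) := by exact_mod_cast Fintype.card_pos
  have hminle : (⨅ y, π y) ≤ 1 / Fintype.card V := by
    rw [le_div_iff₀ hcard, mul_comm, ← hπ1]
    simpa using sum_le_sum fun x (_ : x ∈ univ) => hmin x
  calc ∑ x, π x ^ 2 ≤ ∑ x, π x * ⨆ y, π y := sum_le_sum fun x _ => by
        rw [sq]; exact mul_le_mul_of_nonneg_left (hmax x) (hpos x).le
    _ = ⨆ y, π y := by rw [← sum_mul, hπ1, one_mul]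
    _ ≤ C * ⨅ y, π y := (div_le_iff₀ hminpos).mp hC
    _ ≤ C * (1 / Fintype.card V) := mul_le_mul_of_nonneg_left hminle hC0
    _ = C / Fintype.card V := by ring

theorem half_log_sub_nonneg {N α : ℝ} (hN : Real.exp (2 * α) ≤ N) :
    0 ≤ 1 / 2 * Real.log N - α := by
  have := (Real.le_log_iff_exp_le ((Real.exp_pos _).trans_le hN)).mpr hN
  linarith

section VoterModel
variable {V : Type} [Fintype V]

def spin (b : Bool) : ℝ := if b then 1 else -1

theorem spin_mul_self (b : Bool) : spin b * spin b = 1 := by cases b <;> simp [spin]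

theorem spin_not (b : Bool) : spin (!b) = -spin b := by cases b <;> simp [spin]

theorem ite_ne_mul_spin (a b : Bool) :
    (if b ≠ a then (1 : ℝ) else 0) * spin a = (spin a - spin b) / 2 := by
  cases a <;> cases b <;> norm_num [spin]

noncomputable def magnetization (π : V → ℝ) (η : V → Bool) : ℝ := ∑ x, π x * spin (η x)

theorem magnetization_const_true {π : V → ℝ} (hπ1 : ∑ x, π x = 1) :
    magnetization π (fun _ => true) = 1 := by
  simp [magnetization, spin, hπ1]

variable [DecidableEq V]

theorem magnetization_update_not (π : V → ℝ) (η : V → Bool) (x : V) :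
    magnetization π (Function.update η x (!η x)) = magnetization π η - 2 * (π x * spin (η x)) := by
  have h : ∀ y, π y * spin (Function.update η x (!η x) y)
      = π y * spin (η y) - if y = x then 2 * (π x * spin (η x)) else 0 := by
    intro y
    rcases eq_or_ne y x with rfl | hne
    · rw [Function.update_self, spin_not, if_pos rfl]; ring
    · simp [hne]
  simp only [magnetization, h, sum_sub_distrib, sum_ite_eq', mem_univ, if_true]

theorem genOfRate_mulVec (r : (V → Bool) → V → ℝ) (f : (V → Bool) → ℝ) (η : V → Bool) :
    (genOfRate r *ᵥ f) η = ∑ x, r η x * (f (Function.update η x (!η x)) - f η) := by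
  simp only [genOfRate, Matrix.mulVec, dotProduct, sub_mul, ite_mul, zero_mul, sum_sub_distrib,
    sum_mul, mul_sub]
  rw [sum_comm]
  simp

theorem voterRate_nonneg {q : V → V → ℝ} (hq : ∀ x y, 0 ≤ q x y) (η : V → Bool) (x : V) :
    0 ≤ voterRate q η x :=
  add_nonneg (by norm_num) (sum_nonneg fun y _ => mul_nonneg (hq x y) (by positivity))

theorem voterRate_le {q : V → V → ℝ} (hq : ∀ x y, 0 ≤ q x y) {M : ℝ}
    (hM : ∀ x, ∑ y ∈ univ.filter (fun y => y ≠ x), q x y ≤ M) (η : V → Bool) (x : V) :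
    voterRate q η x ≤ 1 / 2 + M := by
  refine add_le_add_right ((sum_le_sum fun y _ => ?_).trans (hM x)) _
  exact mul_le_of_le_one_right (hq x y) (by split_ifs <;> norm_num)

theorem isRateMatrix_voterGen {q : V → V → ℝ} (hq : ∀ x y, 0 ≤ q x y) :
    (voterGen q).IsRateMatrix where
  apply_nonneg_of_ne η ξ hne := by
    rw [voterGen, genOfRate, if_neg (Ne.symm hne), sub_zero]
    exact sum_nonneg fun x _ => by split_ifs <;> simp [voterRate_nonneg hq]
  mulVec_one := by ext η; simp [voterGen, genOfRate_mulVec]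

/-- The flux `π x q x y` out of each site balances the flux into it, so the voting moves cancel. -/
theorem sum_voterRate_mul_spin {q : V → V → ℝ} {π : V → ℝ} (hπ : IsStationaryChain q π)
    (η : V → Bool) :
    ∑ x, voterRate q η x * (π x * spin (η x)) = magnetization π η / 2 := by
  have hflux : ∑ x, ∑ y ∈ univ.filter (· ≠ x), π x * q x y * spin (η y)
      = ∑ x, ∑ y ∈ univ.filter (· ≠ x), π x * q x y * spin (η x) := by
    rw [sum_comm' (t' := univ) (s' := fun y => univ.filter (· ≠ y)) (by simp [ne_comm])]
    simp only [← sum_mul, hπ.2.2, mul_sum]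
  calc ∑ x, voterRate q η x * (π x * spin (η x))
      = ∑ x, (π x * spin (η x) / 2 + ∑ y ∈ univ.filter (· ≠ x),
          (π x * q x y * spin (η x) - π x * q x y * spin (η y)) / 2) := by
        refine sum_congr rfl fun x _ => ?_
        rw [voterRate, add_mul, sum_mul]
        congr 1
        · ring
        · refine sum_congr rfl fun y _ => ?_
          rw [mul_mul_mul_comm, ite_ne_mul_spin]
          ring
    _ = magnetization π η / 2 := by
        simp only [sum_add_distrib, ← sum_div, sum_sub_distrib, hflux, sub_self, zero_div,
          add_zero, magnetization]

theorem voterGen_mulVec_magnetization {q : V → V → ℝ} {π : V → ℝ}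
    (hπ : IsStationaryChain q π) : voterGen q *ᵥ magnetization π = -magnetization π := by
  ext η
  calc (voterGen q *ᵥ magnetization π) η
      = -(2 * ∑ x, voterRate q η x * (π x * spin (η x))) := by
        rw [voterGen, genOfRate_mulVec, mul_sum, ← sum_neg_distrib]
        exact sum_congr rfl fun x _ => by rw [magnetization_update_not]; ring
    _ = _ := by rw [sum_voterRate_mul_spin hπ, Pi.neg_apply]; ring

theorem voterGen_mulVec_magnetization_sq {q : V → V → ℝ} {π : V → ℝ}
    (hπ : IsStationaryChain q π) (η : V → Bool) :
    (voterGen q *ᵥ fun ξ => magnetization π ξ ^ 2) η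
      = -2 * magnetization π η ^ 2 + 4 * ∑ x, π x ^ 2 * voterRate q η x := by
  calc (voterGen q *ᵥ fun ξ => magnetization π ξ ^ 2) η
      = ∑ x, (-4 * magnetization π η * (voterRate q η x * (π x * spin (η x)))
          + 4 * (π x ^ 2 * voterRate q η x)) := by
        rw [voterGen, genOfRate_mulVec]
        refine sum_congr rfl fun x _ => ?_
        rw [magnetization_update_not]
        linear_combination (4 * voterRate q η x * π x ^ 2) * spin_mul_self (η x)
    _ = _ := by rw [sum_add_distrib, ← mul_sum, ← mul_sum, sum_voterRate_mul_spin hπ]; ring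

theorem voterP_nonneg {q : V → V → ℝ} (hq : ∀ x y, 0 ≤ q x y) {T : ℝ} (hT : 0 ≤ T)
    (η ξ : V → Bool) : 0 ≤ voterP q T η ξ :=
  ((isRateMatrix_voterGen hq).smul hT).exp_apply_nonneg η ξ

theorem sum_voterP {q : V → V → ℝ} (hq : ∀ x y, 0 ≤ q x y) {T : ℝ} (hT : 0 ≤ T)
    (η : V → Bool) : ∑ ξ, voterP q T η ξ = 1 :=
  ((isRateMatrix_voterGen hq).smul hT).sum_exp_apply η

theorem voterP_dotProduct_magnetization {q : V → V → ℝ} {π : V → ℝ}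
    (hπ : IsStationaryChain q π) (T : ℝ) (η : V → Bool) :
    voterP q T η ⬝ᵥ magnetization π = Real.exp (-T) * magnetization π η := by
  have h : (T • voterGen q) *ᵥ magnetization π = (-T) • magnetization π := by
    rw [smul_mulVec, voterGen_mulVec_magnetization hπ, smul_neg, neg_smul]
  exact congrFun (exp_mulVec_of_mulVec_eq_smul h) η

theorem four_mul_sum_sq_mul_voterRate_le {q : V → V → ℝ} (hq : ∀ x y, 0 ≤ q x y) {M : ℝ}
    (hM : ∀ x, ∑ y ∈ univ.filter (fun y => y ≠ x), q x y ≤ M) (π : V → ℝ) (η : V → Bool) :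
    4 * ∑ x, π x ^ 2 * voterRate q η x ≤ (2 + 4 * M) * ∑ x, π x ^ 2 := by
  have h : ∑ x, π x ^ 2 * voterRate q η x ≤ ∑ x, π x ^ 2 * (1 / 2 + M) :=
    sum_le_sum fun x _ => mul_le_mul_of_nonneg_left (voterRate_le hq hM η x) (sq_nonneg _)
  rw [← sum_mul] at h
  linarith

theorem voterGen_mulVec_magnetization_sq_le {q : V → V → ℝ} (hq : ∀ x y, 0 ≤ q x y) {M : ℝ}
    (hM : ∀ x, ∑ y ∈ univ.filter (fun y => y ≠ x), q x y ≤ M) {π : V → ℝ}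
    (hπ : IsStationaryChain q π) (η : V → Bool) :
    (voterGen q *ᵥ fun ξ => magnetization π ξ ^ 2) η
      ≤ -2 * magnetization π η ^ 2 + (2 + 4 * M) * ∑ x, π x ^ 2 := by
  rw [voterGen_mulVec_magnetization_sq hπ]
  linarith [four_mul_sum_sq_mul_voterRate_le hq hM π η]

theorem two_add_four_mul_mul_sum_sq_nonneg {q : V → V → ℝ} (hq : ∀ x y, 0 ≤ q x y) {M : ℝ}
    (hM : ∀ x, ∑ y ∈ univ.filter (fun y => y ≠ x), q x y ≤ M) (π : V → ℝ) :
    0 ≤ (2 + 4 * M) * ∑ x, π x ^ 2 :=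
  le_trans (mul_nonneg zero_le_four (sum_nonneg fun x _ =>
    mul_nonneg (sq_nonneg _) (voterRate_nonneg hq (fun _ => true) x)))
    (four_mul_sum_sq_mul_voterRate_le hq hM π fun _ => true)

theorem sum_voterP_mul_sq_sub_le {q : V → V → ℝ} (hq : ∀ x y, 0 ≤ q x y) {M : ℝ}
    (hM : ∀ x, ∑ y ∈ univ.filter (fun y => y ≠ x), q x y ≤ M) {π : V → ℝ}
    (hπ : IsStationaryChain q π) {T : ℝ} (hT : 0 ≤ T) :
    ∑ ξ, voterP q T (fun _ => true) ξ * (magnetization π ξ - Real.exp (-T)) ^ 2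
      ≤ ((2 + 4 * M) * ∑ x, π x ^ 2) / 2 := by
  have hmean := voterP_dotProduct_magnetization hπ T fun _ => true
  have hsecond : voterP q T (fun _ => true) ⬝ᵥ (fun ξ => magnetization π ξ ^ 2)
      ≤ Real.exp (-2 * T) + ((2 + 4 * M) * ∑ x, π x ^ 2) / -2 * (Real.exp (-2 * T) - 1) := by
    have h := (isRateMatrix_voterGen hq).exp_smul_mulVec_le_gronwallBound
      (voterGen_mulVec_magnetization_sq_le hq hM hπ) hT fun _ => true
    simp only [magnetization_const_true hπ.2.1, one_pow,
      gronwallBound_of_K_ne_0 (show (-2 : ℝ) ≠ 0 by norm_num), one_mul] at h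
    exact h
  rw [magnetization_const_true hπ.2.1, mul_one] at hmean
  have hvar : ∑ ξ, voterP q T (fun _ => true) ξ * (magnetization π ξ - Real.exp (-T)) ^ 2
      = voterP q T (fun _ => true) ⬝ᵥ (fun ξ => magnetization π ξ ^ 2)
        - 2 * Real.exp (-T) * (voterP q T (fun _ => true) ⬝ᵥ magnetization π)
        + Real.exp (-T) ^ 2 * ∑ ξ, voterP q T (fun _ => true) ξ := by
    simp only [dotProduct, mul_sum, ← sum_sub_distrib, ← sum_add_distrib]
    exact sum_congr rfl fun _ _ => by ring
  have hexp2 : Real.exp (-T) ^ 2 = Real.exp (-2 * T) := by rw [← Real.exp_nat_mul]; ring_nf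
  rw [hvar, hmean, sum_voterP hq hT, hexp2]
  nlinarith [mul_nonneg (two_add_four_mul_mul_sum_sq_nonneg hq hM π) (Real.exp_pos (-2 * T)).le]

theorem sum_mul_magnetization_sq_le {q : V → V → ℝ} (hq : ∀ x y, 0 ≤ q x y) {M : ℝ}
    (hM : ∀ x, ∑ y ∈ univ.filter (fun y => y ≠ x), q x y ≤ M) {π : V → ℝ}
    (hπ : IsStationaryChain q π) {μ : (V → Bool) → ℝ} (hμ : IsStationaryNVM q μ) :
    ∑ ξ, μ ξ * magnetization π ξ ^ 2 ≤ ((2 + 4 * M) * ∑ x, π x ^ 2) / 2 := by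
  have h := zero_le_mul_dotProduct_add_of_vecMul_eq_zero hμ.1 hμ.2.1 (funext hμ.2.2)
    (voterGen_mulVec_magnetization_sq_le hq hM hπ)
  change 0 ≤ -2 * ∑ ξ, μ ξ * magnetization π ξ ^ 2 + _ at h
  linarith

theorem one_sub_le_tvDist_voterP {q : V → V → ℝ} (hq : ∀ x y, 0 ≤ q x y) {M : ℝ}
    (hM : ∀ x, ∑ y ∈ univ.filter (fun y => y ≠ x), q x y ≤ M) {π : V → ℝ}
    (hπ : IsStationaryChain q π) {μ : (V → Bool) → ℝ} (hμ : IsStationaryNVM q μ) {T : ℝ}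
    (hT : 0 ≤ T) :
    1 - 4 * ((2 + 4 * M) * ∑ x, π x ^ 2) * Real.exp (2 * T)
      ≤ tvDist (voterP q T (fun _ => true)) μ := by
  calc 1 - 4 * ((2 + 4 * M) * ∑ x, π x ^ 2) * Real.exp (2 * T)
      = 1 - 8 * (((2 + 4 * M) * ∑ x, π x ^ 2) / 2) / Real.exp (-T) ^ 2 := by
        rw [← Real.exp_nat_mul, Nat.cast_ofNat, mul_neg, Real.exp_neg, div_inv_eq_mul]; ring
    _ ≤ tvDist (voterP q T (fun _ => true)) μ :=
        one_sub_le_tvDist_of_moments (voterP_nonneg hq hT _) (sum_voterP hq hT _) hμ.1 hμ.2.1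
          (Real.exp_pos _) (sum_voterP_mul_sq_sub_le hq hM hπ hT)
          (sum_mul_magnetization_sq_le hq hM hπ hμ)

theorem one_sub_le_tvDist_voterP_half_log {q : V → V → ℝ} (hq : ∀ x y, 0 ≤ q x y) {M : ℝ}
    (hM : ∀ x, ∑ y ∈ univ.filter (fun y => y ≠ x), q x y ≤ M) {π : V → ℝ}
    (hπ : IsStationaryChain q π) (hpos : ∀ x, 0 < π x) {C : ℝ}
    (hC : (⨆ x, π x) / (⨅ x, π x) ≤ C) {μ : (V → Bool) → ℝ} (hμ : IsStationaryNVM q μ) {α : ℝ}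
    (hN : Real.exp (2 * α) ≤ Fintype.card V) :
    1 - 4 * (2 + 4 * M) * C * Real.exp (-(2 * α))
      ≤ tvDist (voterP q (1 / 2 * Real.log (Fintype.card V) - α) (fun _ => true)) μ := by
  set N : ℝ := (Fintype.card V : ℝ)
  have hN0 : 0 < N := (Real.exp_pos _).trans_le hN
  have : Nonempty V := Fintype.card_pos_iff.mp (Nat.cast_pos.mp hN0)
  have hM0 : 0 ≤ M :=
    (sum_nonneg fun y _ => hq _ y).trans (hM (Classical.arbitrary V))
  have hexp : Real.exp (2 * (1 / 2 * Real.log N - α)) = N * Real.exp (-(2 * α)) := by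
    rw [show 2 * (1 / 2 * Real.log N - α) = Real.log N + -(2 * α) by ring, Real.exp_add,
      Real.exp_log hN0]
  have hsq : (∑ x, π x ^ 2) * N ≤ C := (le_div_iff₀ hN0).mp (sum_sq_le_div_card hπ.2.1 hpos hC)
  refine le_trans ?_ (one_sub_le_tvDist_voterP hq hM hπ hμ (half_log_sub_nonneg hN))
  rw [hexp]
  linear_combination (4 * (2 + 4 * M) * Real.exp (-(2 * α))) * hsq

end VoterModel

theorem stmt_3_general {S : ℕ → Type} [∀ n, Fintype (S n)] [∀ n, DecidableEq (S n)]
    (q : ∀ n, S n → S n → ℝ)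
    (hq : ∀ n x y, 0 ≤ q n x y)
    (hcard : Filter.Tendsto (fun n => (Fintype.card (S n) : ℝ)) Filter.atTop Filter.atTop)
    (M : ℝ) (hM : ∀ n x, ∑ y ∈ Finset.univ.filter (fun y => y ≠ x), q n x y ≤ M)
    (C : ℝ)
    (hC : ∀ n, ∃ π : S n → ℝ, IsStationaryChain (q n) π ∧ (∀ x, 0 < π x) ∧
        (⨆ x, π x) / (⨅ x, π x) ≤ C)
    (μinf : ∀ n, (S n → Bool) → ℝ) (hμ : ∀ n, IsStationaryNVM (q n) (μinf n)) :
    Filter.Tendsto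
      (fun α : ℝ => Filter.liminf
        (fun n => tvDist
          (voterP (q n) ((1 / 2) * Real.log (Fintype.card (S n)) - α) (fun _ => true))
          (μinf n))
        Filter.atTop)
      Filter.atTop (nhds 1) := by
  refine Filter.tendsto_liminf_of_forall_eventually_le
    (g := fun α => 1 - 4 * (2 + 4 * M) * C * Real.exp (-(2 * α))) ?_ fun α => ?_
  · have h := Real.tendsto_exp_neg_atTop_nhds_zero.comp (tendsto_id.const_mul_atTop two_pos)
    simpa using (h.const_mul (4 * (2 + 4 * M) * C)).const_sub 1
  · filter_upwards [hcard.eventually_ge_atTop (Real.exp (2 * α))] with n hn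
    obtain ⟨π, hπ, hpos, hratio⟩ := hC n
    have hT := half_log_sub_nonneg hn
    exact ⟨one_sub_le_tvDist_voterP_half_log (hq n) (hM n) hπ hpos hratio (hμ n) hn,
      tvDist_le_one (voterP_nonneg (hq n) hT _) (sum_voterP (hq n) hT _) (hμ n).1 (hμ n).2.1⟩

/-- **Theorem 1, eq. (2), of Cox–Peres–Steif (cutoff lower bound).** Under bounded rates and
almost-uniform stationary distributions,
`lim_{α→∞} liminf_{n→∞} ‖μ^{n,𝟏}_{(1/2)log|Sⁿ| − α} − μⁿ_∞‖_TV = 1`. -/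
theorem stmt_3 {S : ℕ → Type} [∀ n, Fintype (S n)] [∀ n, DecidableEq (S n)]
    (q : ∀ n, S n → S n → ℝ)
    (hq : ∀ n x y, 0 ≤ q n x y) (hqdiag : ∀ n x, q n x x = 0)
    (hcard : Filter.Tendsto (fun n => (Fintype.card (S n) : ℝ)) Filter.atTop Filter.atTop)
    (M : ℝ) (hM : ∀ n x, ∑ y ∈ Finset.univ.filter (fun y => y ≠ x), q n x y ≤ M)
    (C : ℝ)
    (hC : ∀ n, ∃ π : S n → ℝ, IsStationaryChain (q n) π ∧ (∀ x, 0 < π x) ∧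
        (⨆ x, π x) / (⨅ x, π x) ≤ C)
    (μinf : ∀ n, (S n → Bool) → ℝ) (hμ : ∀ n, IsStationaryNVM (q n) (μinf n)) :
    Filter.Tendsto
      (fun α : ℝ => Filter.liminf
        (fun n => tvDist
          (voterP (q n) ((1 / 2) * Real.log (Fintype.card (S n)) - α) (fun _ => true))
          (μinf n))
        Filter.atTop)
      Filter.atTop (nhds 1) :=
  stmt_3_general q hq hcard M hM C hC μinf hμ
end

section
/- Consider the noisy voter model corresponding to continuous-time random walk with parameter 1 on the n-star, with n even. Partition the leaves into disjoint sets A and B each of size n/2, and define Φ(η) = ∑_{x∈A} η(x) − ∑_{x∈B} η(x). Then for all t ≥ 0 and all configurations η: E_η[Φ(η_t)] = e^{−2t}·Φ(η); that is, ∑_{η'} P^t(η,η')·Φ(η') = e^{−2t}·Φ(η). -/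
open scoped BigOperators

/-- Voting rates of continuous-time random walk with parameter 1 on the `n`-star:
`none` is the center vertex and `some i` (for `i : Fin n`) are the leaves. A leaf jumps to the
center at rate 1, and the center jumps to a uniformly chosen leaf at rate 1. -/
noncomputable def starQ (n : ℕ) : Option (Fin n) → Option (Fin n) → ℝ :=
  fun x y => match x, y with
    | some _, none => 1
    | none, some _ => 1 / (n : ℝ)
    | _, _ => 0

/-!
Write `s_x = 1{η(x)}`. The function `Φ` is a weighted sum `∑ₐ w(a) s_a` of leaf spins with weights
`w = 1_A - 1_B` summing to zero. Flipping the center does not change `Φ`; flipping a leaf `a`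
happens at rate `1/2 + 1{s_center ≠ s_a}` and changes `s_a` by `1 - 2 s_a`, and
`(1/2 + 1{s_center ≠ s_a}) (1 - 2 s_a) = 1/2 + s_center - 2 s_a`. Summing against `w`, the
center-dependent part is multiplied by `∑ₐ w(a) = 0`, so `Q Φ = -2 Φ`, and the exponential
series gives `exp(tQ) Φ = e^{-2t} Φ`.
-/

open Finset Matrix
attribute [local instance] Matrix.linftyOpNormedAddCommGroup Matrix.linftyOpNormedRing
  Matrix.linftyOpNormedAlgebra

theorem Matrix.exp_mulVec_of_mulVec_eq_smul_s11 {m : Type} [Fintype m] [DecidableEq m]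
    {Q : Matrix m m ℝ} {v : m → ℝ} {c : ℝ} (h : Q *ᵥ v = c • v) :
    NormedSpace.exp Q *ᵥ v = Real.exp c • v := by
  have hpow : ∀ k : ℕ, Q ^ k *ᵥ v = c ^ k • v := by
    intro k
    induction k with
    | zero => simp
    | succ k ih => rw [pow_succ, ← mulVec_mulVec, h, mulVec_smul, ih, smul_smul, pow_succ']
  have hQ := (NormedSpace.exp_series_hasSum_exp' (𝕂 := ℝ) Q).map
    (mulVec.addMonoidHomLeft v) (continuous_id.matrix_mulVec continuous_const)
  have hc := (NormedSpace.exp_series_hasSum_exp' (𝕂 := ℝ) c).smul_const v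
  rw [← Real.exp_eq_exp_ℝ] at hc
  refine hQ.unique (hc.congr_fun fun k => ?_)
  simp [mulVec.addMonoidHomLeft, smul_mulVec, hpow, smul_smul]

theorem sum_genOfRate_mul {V : Type} [Fintype V] [DecidableEq V]
    (r : (V → Bool) → V → ℝ) (f : (V → Bool) → ℝ) (η : V → Bool) :
    ∑ ξ, genOfRate r η ξ * f ξ = ∑ x, r η x * (f (Function.update η x (!η x)) - f η) := by
  simp only [genOfRate, sub_mul, sum_sub_distrib, sum_mul, ite_mul, zero_mul, mul_sub]
  rw [sum_comm]
  simp

theorem voterRate_starQ_some (n : ℕ) (η : Option (Fin n) → Bool) (a : Fin n) :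
    voterRate (starQ n) η (some a) = 1 / 2 + if η none ≠ η (some a) then 1 else 0 := by
  rw [voterRate, sum_eq_single_of_mem none (by simp)]
  · simp [starQ]
  · rintro (_ | b) _ hb
    · exact absurd rfl hb
    · simp [starQ]

namespace Star

variable {n : ℕ}

noncomputable def leafSum (w : Fin n → ℝ) (η : Option (Fin n) → Bool) : ℝ :=
  ∑ a, w a * if η (some a) then 1 else 0

theorem leafSum_update_none (w : Fin n → ℝ) (η : Option (Fin n) → Bool) (b : Bool) :
    leafSum w (Function.update η none b) = leafSum w η := by
  simp [leafSum]

theorem leafSum_update_some (w : Fin n → ℝ) (η : Option (Fin n) → Bool) (a : Fin n) (b : Bool) :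
    leafSum w (Function.update η (some a) b) - leafSum w η
      = w a * ((if b then 1 else 0) - if η (some a) then 1 else 0) := by
  rw [leafSum, leafSum, ← sum_sub_distrib, sum_eq_single a]
  · simp [mul_sub]
  · intro x _ hx
    simp [Function.update_of_ne (Option.some_injective _ |>.ne hx)]
  · simp

theorem sum_voterGen_starQ_mul_leafSum (w : Fin n → ℝ) (η : Option (Fin n) → Bool) :
    ∑ ξ, voterGen (starQ n) η ξ * leafSum w ξ
      = (1 / 2 + if η none then 1 else 0) * ∑ a, w a - 2 * leafSum w η := by
  rw [voterGen, sum_genOfRate_mul, Fintype.sum_option, leafSum_update_none, sub_self, mul_zero,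
    zero_add]
  simp only [voterRate_starQ_some, leafSum_update_some]
  rw [leafSum, mul_sum, mul_sum, ← sum_sub_distrib]
  refine sum_congr rfl fun a _ => ?_
  cases η none <;> cases η (some a) <;> norm_num <;> ring

theorem voterGen_starQ_mulVec_leafSum {w : Fin n → ℝ} (hw : ∑ a, w a = 0) :
    voterGen (starQ n) *ᵥ leafSum w = (-2 : ℝ) • leafSum w := by
  ext η
  simp [mulVec, dotProduct, sum_voterGen_starQ_mul_leafSum, hw]

end Star

theorem stmt_11_general (n : ℕ)
    (A B : Finset (Fin n))
    (hA : A.card = n / 2) (hB : B.card = n / 2)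
    (Φ : (Option (Fin n) → Bool) → ℝ)
    (hΦ : ∀ η, Φ η = (∑ x ∈ A, (if η (some x) then (1 : ℝ) else 0))
        - ∑ x ∈ B, (if η (some x) then (1 : ℝ) else 0)) :
    ∀ t : ℝ, 0 ≤ t → ∀ η : Option (Fin n) → Bool,
      ∑ η' : Option (Fin n) → Bool, voterP (starQ n) t η η' * Φ η'
        = Real.exp (-2 * t) * Φ η := by
  intro t _ η
  let w : Fin n → ℝ := fun a => (if a ∈ A then 1 else 0) - if a ∈ B then 1 else 0
  have hw : ∑ a, w a = 0 := by simp [w, sum_sub_distrib, hA, hB]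
  have hΦw : Φ = Star.leafSum w := by
    ext η
    simp only [hΦ, Star.leafSum, w, sub_mul, sum_sub_distrib, ite_mul, one_mul, zero_mul, sum_ite_mem,
      univ_inter]
  have heig : (t • voterGen (starQ n)) *ᵥ Φ = (-2 * t) • Φ := by
    rw [smul_mulVec, hΦw, Star.voterGen_starQ_mulVec_leafSum hw, smul_smul, mul_comm]
  have := congrFun (exp_mulVec_of_mulVec_eq_smul_s11 heig) η
  simpa [voterP, mulVec, dotProduct] using this

/-- **Eigenfunction identity in the proof of Theorem 2(i) of Cox–Peres–Steif.** For the noisy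
voter model on the `n`-star with the leaves partitioned into two sets `A`, `B` of size `n/2`,
the function `Φ(η) = ∑_{x∈A} η(x) − ∑_{x∈B} η(x)` satisfies `E_η[Φ(η_t)] = e^{−2t} Φ(η)`. -/
theorem stmt_11 (n : ℕ) (hn : Even n)
    (A B : Finset (Fin n)) (hAB : Disjoint A B) (hABunion : A ∪ B = Finset.univ)
    (hA : A.card = n / 2) (hB : B.card = n / 2)
    (Φ : (Option (Fin n) → Bool) → ℝ)
    (hΦ : ∀ η, Φ η = (∑ x ∈ A, (if η (some x) then (1 : ℝ) else 0))
        - ∑ x ∈ B, (if η (some x) then (1 : ℝ) else 0)) :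
    ∀ t : ℝ, 0 ≤ t → ∀ η : Option (Fin n) → Bool,
      ∑ η' : Option (Fin n) → Bool, voterP (starQ n) t η η' * Φ η'
        = Real.exp (-2 * t) * Φ η :=
  stmt_11_general n A B hA hB Φ hΦ
end

section
/- Consider the noisy voter model corresponding to continuous-time random walk with parameter 1 on the n-star, and the reduced chain on {0,1} × {0,1,…,n} obtained by recording the state of the center and the number of leaves in state 1. Then for all t ≥ 0 and all n ≥ 1: ‖μ^𝟏_t − μ_∞‖_TV = ‖P_n^t((1,n),·) − π_n‖_TV, where 𝟏 is the all-ones configuration of the full noisy voter model on the n-star, μ_∞ its stationary distribution, P_n^t the transition semigroup of the reduced chain, and π_n the stationary distribution of the reduced chain. -/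
open scoped BigOperators

/-- Off-diagonal jump rates of the reduced chain on `{0,1} × {0,1,…,n}` (state of the center,
number of leaves in state 1); `true` codes 1 and `false` codes 0. -/
noncomputable def reducedRate (n : ℕ) : Bool × Fin (n + 1) → Bool × Fin (n + 1) → ℝ :=
  fun s t =>
    if s.1 = t.1 then
      (if (t.2 : ℕ) = (s.2 : ℕ) + 1 then
        (if s.1 then 3 * ((n : ℝ) - ((s.2 : ℕ) : ℝ)) / 2 else ((n : ℝ) - ((s.2 : ℕ) : ℝ)) / 2)
      else if (s.2 : ℕ) = (t.2 : ℕ) + 1 then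
        (if s.1 then ((s.2 : ℕ) : ℝ) / 2 else 3 * ((s.2 : ℕ) : ℝ) / 2)
      else 0)
    else
      (if s.2 = t.2 then
        (if s.1 then 1 / 2 + ((n : ℝ) - ((s.2 : ℕ) : ℝ)) / (n : ℝ)
         else 1 / 2 + ((s.2 : ℕ) : ℝ) / (n : ℝ))
      else 0)

/-- Generator of the reduced chain on `{0,1} × {0,1,…,n}`. -/
noncomputable def reducedGen (n : ℕ) : Matrix (Bool × Fin (n + 1)) (Bool × Fin (n + 1)) ℝ :=
  fun s t => if s = t then -∑ u, reducedRate n s u else reducedRate n s t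

/-- Transition semigroup `P^t = exp (t Qₙ)` of the reduced chain. -/
noncomputable def reducedP (n : ℕ) (t : ℝ) :
    Matrix (Bool × Fin (n + 1)) (Bool × Fin (n + 1)) ℝ :=
  NormedSpace.exp (t • reducedGen n)

/-- `π` is a stationary distribution of the reduced chain. -/
def IsStationaryReduced (n : ℕ) (π : Bool × Fin (n + 1) → ℝ) : Prop :=
  (∀ s, 0 ≤ π s) ∧ (∑ s, π s = 1) ∧ ∀ t, ∑ s, π s * reducedGen n s t = 0

/-!
Let `Φ` send a configuration on the star to the state of the center and the number of leaves in
state 1, and let `L` be the 0/1 matrix of `Φ`. The voter generator `Q` and the reduced generator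
`Qₙ` satisfy Dynkin's lumpability criterion `Q L = L Qₙ`: off the diagonal this is a count of
the single flips leading into each fibre, and on the diagonal it follows because both rows sum to
zero. Hence `exp (tQ) L = L exp (tQₙ)`, so `P_n^t((1,n),·)` is the image of `μ^𝟏_t` under `Φ`;
likewise the image of `μ_∞` is stationary for `Qₙ`, which is irreducible because `Q` is, so it
is `π_n`.

Permuting the leaves commutes with `Q`, so `μ^𝟏_t` and (by uniqueness) `μ_∞` are invariant under
it. The fibres of `Φ` are exactly the orbits of this action, so both measures are constant on
fibres, and for such measures the image under `Φ` has the same total variation distance.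
-/

open Finset Matrix

section MatrixExp

-- `NormedSpace.exp` only needs the topology; a submultiplicative norm is needed for summability.
attribute [local instance] Matrix.linftyOpNormedRing Matrix.linftyOpNormedAlgebra

theorem exp_mul_eq_mul_exp_of_mul_eq {V S : Type} [Fintype V] [DecidableEq V] [Fintype S]
    [DecidableEq S] {A : Matrix V V ℝ} {B : Matrix S S ℝ} {L : Matrix V S ℝ}
    (h : A * L = L * B) : NormedSpace.exp A * L = L * NormedSpace.exp B := by
  have hpow (k : ℕ) : A ^ k * L = L * B ^ k := by
    induction k with
    | zero => simp
    | succ k ih => rw [pow_succ, pow_succ, Matrix.mul_assoc, h, ← Matrix.mul_assoc, ih,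
        Matrix.mul_assoc]
  let mulL := (mulRightLinearMap V ℝ L).toContinuousLinearMap
  let Lmul := (mulLeftLinearMap S ℝ L).toContinuousLinearMap
  rw [NormedSpace.exp_eq_tsum ℝ, NormedSpace.exp_eq_tsum ℝ]
  change mulL _ = Lmul _
  rw [mulL.map_tsum (NormedSpace.expSeries_summable' A),
    Lmul.map_tsum (NormedSpace.expSeries_summable' B)]
  congr 1 with k : 1
  simp [mulL, Lmul, hpow]

end MatrixExp

section Lumping

theorem eq_of_sum_eq_of_forall_ne {S M : Type} [Fintype S] [DecidableEq S] [AddCommGroup M]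
    {f g : S → M} (a : S) (hsum : ∑ s, f s = ∑ s, g s) (h : ∀ s ≠ a, f s = g s) : f = g := by
  funext s
  by_cases hs : s = a
  · subst hs
    rw [Fintype.sum_eq_add_sum_compl s, Fintype.sum_eq_add_sum_compl s,
      sum_congr rfl fun u hu => h u (by simpa using hu)] at hsum
    exact add_right_cancel hsum
  · exact h s hs

variable {V S : Type} [DecidableEq S] {Φ : V → S}

variable (Φ) in
def fiberMatrix : Matrix V S ℝ :=
  of fun v s => if Φ v = s then 1 else 0

theorem fiberMatrix_mul_apply [Fintype S] (N : Matrix S S ℝ) (v : V) :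
    (fiberMatrix Φ * N) v = N (Φ v) := by
  ext s
  simp [mul_apply, fiberMatrix]

variable [Fintype V]

variable (Φ) in
def pushforward (m : V → ℝ) (s : S) : ℝ :=
  ∑ v with Φ v = s, m v

theorem vecMul_fiberMatrix (m : V → ℝ) : m ᵥ* fiberMatrix Φ = pushforward Φ m := by
  ext s
  simp [vecMul, dotProduct, fiberMatrix, pushforward, sum_filter]

theorem mul_fiberMatrix_apply (M : Matrix V V ℝ) (v : V) :
    (M * fiberMatrix Φ) v = pushforward Φ (M v) :=
  vecMul_fiberMatrix (M v)

theorem sum_pushforward [Fintype S] (m : V → ℝ) : ∑ s, pushforward Φ m s = ∑ v, m v :=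
  sum_fiberwise univ Φ m

theorem pushforward_equiv_apply [DecidableEq V] (e : V ≃ V) (m : V → ℝ) (v : V) :
    pushforward e m v = m (e.symm v) := by
  simp [pushforward, sum_filter, ← Equiv.eq_symm_apply]

variable [Fintype S]

theorem vecMul_pushforward_eq_zero {Q : Matrix V V ℝ} {Q' : Matrix S S ℝ}
    (h : Q * fiberMatrix Φ = fiberMatrix Φ * Q') {μ : V → ℝ} (hμ : μ ᵥ* Q = 0) :
    pushforward Φ μ ᵥ* Q' = 0 := by
  rw [← vecMul_fiberMatrix, vecMul_vecMul, ← h, ← vecMul_vecMul, hμ, zero_vecMul]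

variable [DecidableEq V]

theorem pushforward_exp_smul_apply {Q : Matrix V V ℝ} {Q' : Matrix S S ℝ}
    (h : Q * fiberMatrix Φ = fiberMatrix Φ * Q') (t : ℝ) (v : V) :
    pushforward Φ (NormedSpace.exp (t • Q) v) = NormedSpace.exp (t • Q') (Φ v) := by
  have hexp := exp_mul_eq_mul_exp_of_mul_eq (show t • Q * fiberMatrix Φ = fiberMatrix Φ * t • Q'
    by rw [Matrix.smul_mul, Matrix.mul_smul, h])
  rw [← mul_fiberMatrix_apply, hexp, fiberMatrix_mul_apply]

theorem exp_smul_apply_equiv {Q : Matrix V V ℝ} (e : V ≃ V)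
    (he : ∀ v w, Q (e v) (e w) = Q v w) (t : ℝ) (v w : V) :
    NormedSpace.exp (t • Q) (e v) (e w) = NormedSpace.exp (t • Q) v w := by
  have h : Q * fiberMatrix e = fiberMatrix e * Q := by
    ext v s
    rw [mul_fiberMatrix_apply, fiberMatrix_mul_apply, pushforward_equiv_apply, ← he,
      Equiv.apply_symm_apply]
  have := congrFun (pushforward_exp_smul_apply h t v) (e w)
  rwa [pushforward_equiv_apply, Equiv.symm_apply_apply, eq_comm] at this

end Lumping

section TotalVariation

variable {V S : Type} [Fintype V] [Fintype S] [DecidableEq S] {Φ : V → S}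

theorem sum_abs_eq_sum_abs_pushforward {h : V → ℝ} (hh : ∀ v w, Φ v = Φ w → h v = h w) :
    ∑ v, |h v| = ∑ s, |pushforward Φ h s| := by
  rw [← sum_fiberwise univ Φ (fun v => |h v|)]
  refine sum_congr rfl fun s _ => ?_
  rcases (univ.filter (Φ · = s)).eq_empty_or_nonempty with hs | ⟨v₀, hv₀⟩
  · simp [pushforward, hs]
  · have hconst : ∀ v ∈ univ.filter (Φ · = s), h v = h v₀ := fun v hv =>
      hh v v₀ ((mem_filter.1 hv).2.trans (mem_filter.1 hv₀).2.symm)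
    rw [pushforward, sum_congr rfl hconst, sum_congr rfl fun v hv => congrArg abs (hconst v hv),
      sum_const, sum_const, abs_nsmul]

theorem tvDist_pushforward {m₁ m₂ : V → ℝ} (h₁ : ∀ v w, Φ v = Φ w → m₁ v = m₁ w)
    (h₂ : ∀ v w, Φ v = Φ w → m₂ v = m₂ w) :
    tvDist (pushforward Φ m₁) (pushforward Φ m₂) = tvDist m₁ m₂ := by
  have hsub : ∀ s, pushforward Φ m₁ s - pushforward Φ m₂ s = pushforward Φ (m₁ - m₂) s :=
    fun s => (sum_sub_distrib ..).symm
  simp only [tvDist, hsub]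
  rw [sum_abs_eq_sum_abs_pushforward (Φ := Φ) fun v w hvw => by
    simp only [h₁ v w hvw, h₂ v w hvw]]
  rfl

end TotalVariation

section Generator

variable {V : Type} [Fintype V]

theorem Matrix.finrank_ker_mulVecLin_transpose {K : Type} [Field K] (A : Matrix V V K) :
    Module.finrank K (LinearMap.ker Aᵀ.mulVecLin)
      = Module.finrank K (LinearMap.ker A.mulVecLin) := by
  have h := LinearMap.finrank_range_add_finrank_ker A.mulVecLin
  have hT := LinearMap.finrank_range_add_finrank_ker Aᵀ.mulVecLin
  have hrank : Aᵀ.rank = A.rank := rank_transpose A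
  unfold Matrix.rank at hrank
  omega

structure IsIrreducibleGenerator (Q : Matrix V V ℝ) : Prop where
  nonneg_of_ne : ∀ x y, x ≠ y → 0 ≤ Q x y
  sum_row : ∀ x, ∑ y, Q x y = 0
  reachable : ∀ x y, Relation.ReflTransGen (fun a b => 0 < Q a b) x y

namespace IsIrreducibleGenerator

variable {Q : Matrix V V ℝ}

theorem apply_eq_of_mulVec_eq_zero (hQ : IsIrreducibleGenerator Q) {f : V → ℝ}
    (hf : Q *ᵥ f = 0) (x y : V) : f x = f y := by
  -- Maximum principle: `f` stays maximal along every positive-rate jump from a maximum point.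
  obtain ⟨x₀, -, hx₀⟩ := exists_max_image univ f ⟨x, mem_univ x⟩
  suffices h : ∀ z, f z = f x₀ by rw [h x, h y]
  intro z
  induction hQ.reachable x₀ z with
  | refl => rfl
  | @tail b c _ hbc ih =>
    have hterm_nonpos : ∀ y ∈ univ, Q b y * (f y - f b) ≤ 0 := by
      intro y _
      rcases eq_or_ne b y with rfl | hby
      · simp
      · exact mul_nonpos_of_nonneg_of_nonpos (hQ.nonneg_of_ne b y hby)
          (by linarith [ih, hx₀ y (mem_univ y)])
    have hsum : ∑ y, Q b y * (f y - f b) = 0 := by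
      simp only [mul_sub, sum_sub_distrib, ← sum_mul, hQ.sum_row b, zero_mul, sub_zero]
      exact congrFun hf b
    have hc := (sum_eq_zero_iff_of_nonpos hterm_nonpos).1 hsum c (mem_univ c)
    rcases mul_eq_zero.1 hc with h | h
    · exact absurd h hbc.ne'
    · linarith

theorem finrank_ker_mulVecLin [Nonempty V] (hQ : IsIrreducibleGenerator Q) :
    Module.finrank ℝ (LinearMap.ker Q.mulVecLin) = 1 := by
  have hker : LinearMap.ker Q.mulVecLin = ℝ ∙ (fun _ => 1 : V → ℝ) := by
    apply le_antisymm
    · intro f hf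
      obtain ⟨x⟩ := ‹Nonempty V›
      refine Submodule.mem_span_singleton.2 ⟨f x, funext fun y => ?_⟩
      simp [hQ.apply_eq_of_mulVec_eq_zero (LinearMap.mem_ker.1 hf) x y]
    · rw [Submodule.span_singleton_le_iff_mem, LinearMap.mem_ker]
      ext x
      simpa [mulVec, dotProduct] using hQ.sum_row x
  rw [hker, finrank_span_singleton]
  exact Function.ne_iff.2 ⟨Classical.arbitrary V, one_ne_zero⟩

theorem eq_of_vecMul_eq_zero (hQ : IsIrreducibleGenerator Q) {μ ν : V → ℝ}
    (hμ : μ ᵥ* Q = 0) (hν : ν ᵥ* Q = 0) (hμ₁ : ∑ x, μ x = 1) (hν₁ : ∑ x, ν x = 1) : μ = ν := by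
  have : Nonempty V := by
    by_contra h
    simp [not_nonempty_iff.1 h] at hμ₁
  set K := LinearMap.ker Qᵀ.mulVecLin
  have hK : Module.finrank ℝ K = 1 := by
    rw [Matrix.finrank_ker_mulVecLin_transpose, hQ.finrank_ker_mulVecLin]
  have hmem {m : V → ℝ} (hm : m ᵥ* Q = 0) : m ∈ K := by
    rwa [LinearMap.mem_ker, mulVecLin_apply, mulVec_transpose]
  have hμ0 : (⟨μ, hmem hμ⟩ : K) ≠ 0 := by
    intro h
    simp [show μ = 0 from congrArg Subtype.val h] at hμ₁
  obtain ⟨c, hc⟩ := (finrank_eq_one_iff_of_nonzero' _ hμ0).1 hK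
    ⟨μ - ν, hmem (by rw [sub_vecMul, hμ, hν, sub_zero])⟩
  have hc' : c • μ = μ - ν := congrArg Subtype.val hc
  have hc0 : c = 0 := by
    have := congrArg (fun m => ∑ x, m x) hc'
    simpa [← mul_sum, hμ₁, hν₁] using this
  rw [hc0, zero_smul, eq_comm, sub_eq_zero] at hc'
  exact hc'

theorem apply_equiv_of_vecMul_eq_zero (hQ : IsIrreducibleGenerator Q) (e : V ≃ V)
    (he : ∀ v w, Q (e v) (e w) = Q v w) {μ : V → ℝ} (hμ : μ ᵥ* Q = 0) (hμ₁ : ∑ x, μ x = 1)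
    (v : V) : μ (e v) = μ v := by
  have hμe : (μ ∘ e) ᵥ* Q = 0 := by
    ext w
    have := congrFun hμ (e w)
    simp only [vecMul, dotProduct, Pi.zero_apply] at this ⊢
    rw [← this]
    exact Fintype.sum_equiv e _ _ fun x => by rw [he]; rfl
  have hμe₁ : ∑ x, (μ ∘ e) x = 1 := by rw [← hμ₁]; exact e.sum_comp μ
  exact congrFun (hQ.eq_of_vecMul_eq_zero hμe hμ hμe₁ hμ₁) v

variable {S : Type} [Fintype S] [DecidableEq S] {Φ : V → S} {Q' : Matrix S S ℝ}

theorem of_mul_fiberMatrix (hQ : IsIrreducibleGenerator Q) (hΦ : Function.Surjective Φ)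
    (h : Q * fiberMatrix Φ = fiberMatrix Φ * Q') : IsIrreducibleGenerator Q' := by
  have hrow (v : V) : Q' (Φ v) = pushforward Φ (Q v) := by
    rw [← mul_fiberMatrix_apply, h, fiberMatrix_mul_apply]
  have hnonneg {v : V} {s : S} (hs : Φ v ≠ s) : 0 ≤ Q' (Φ v) s := by
    rw [hrow]
    refine sum_nonneg fun w hw => hQ.nonneg_of_ne v w ?_
    rintro rfl
    exact hs (mem_filter.1 hw).2
  refine ⟨fun s u hsu => ?_, fun s => ?_, fun s u => ?_⟩
  · obtain ⟨v, rfl⟩ := hΦ s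
    exact hnonneg hsu
  · obtain ⟨v, rfl⟩ := hΦ s
    rw [hrow, sum_pushforward, hQ.sum_row]
  · obtain ⟨v, rfl⟩ := hΦ s
    obtain ⟨w, rfl⟩ := hΦ u
    refine (hQ.reachable v w).lift' Φ fun a b hab => ?_
    rcases eq_or_ne (Φ a) (Φ b) with hΦab | hΦab
    · show Relation.ReflTransGen _ (Φ a) (Φ b)
      rw [hΦab]
    refine .single (hab.trans_le ?_)
    rw [hrow]
    refine single_le_sum (fun c hc => hQ.nonneg_of_ne a c ?_) (mem_filter.2 ⟨mem_univ b, rfl⟩)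
    rintro rfl
    exact hΦab (mem_filter.1 hc).2

end IsIrreducibleGenerator

end Generator

section SpinSystem

open Function

theorem update_not_ne_self {V : Type} [DecidableEq V] (η : V → Bool) (x : V) :
    update η x (!η x) ≠ η :=
  fun h => by simpa using congrFun h x

variable {V : Type} [Fintype V] [DecidableEq V] {r : (V → Bool) → V → ℝ}

theorem genOfRate_apply_of_ne {η ξ : V → Bool} (h : ξ ≠ η) :
    genOfRate r η ξ = ∑ x, if ξ = update η x (!η x) then r η x else 0 := by
  simp [genOfRate, h]

theorem sum_genOfRate_row (η : V → Bool) : ∑ ξ, genOfRate r η ξ = 0 := by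
  simp [genOfRate, sum_sub_distrib, sum_comm (γ := V → Bool)]

theorem pushforward_genOfRate_of_ne {S : Type} [DecidableEq S] {Φ : (V → Bool) → S}
    {η : V → Bool} {s : S} (hs : Φ η ≠ s) :
    pushforward Φ (genOfRate r η) s = ∑ x, if Φ (update η x (!η x)) = s then r η x else 0 := by
  calc pushforward Φ (genOfRate r η) s
      = ∑ ξ, ∑ x, if ξ = update η x (!η x) ∧ Φ ξ = s then r η x else 0 := by
        rw [pushforward, sum_filter]
        refine sum_congr rfl fun ξ _ => ?_
        split_ifs with hξ
        · rw [genOfRate_apply_of_ne (by rintro rfl; exact hs hξ)]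
          simp [hξ]
        · simp [hξ]
    _ = _ := by
        rw [sum_comm]
        simp [ite_and]

theorem reflTransGen_of_flip {R : (V → Bool) → (V → Bool) → Prop}
    (h : ∀ η x, R η (update η x (!η x))) (η ξ : V → Bool) : Relation.ReflTransGen R η ξ := by
  suffices ∀ D : Finset V, ∀ η, (∀ x ∉ D, η x = ξ x) → Relation.ReflTransGen R η ξ from
    this univ η fun x hx => absurd (mem_univ x) hx
  intro D
  induction D using Finset.induction_on with
  | empty => exact fun η hη => (funext fun x => hη x (notMem_empty x)) ▸ .refl
  | insert a D _ ih =>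
    intro η hη
    by_cases ha : η a = ξ a
    · refine ih η fun x hx => ?_
      by_cases hxa : x = a
      · exact hxa ▸ ha
      · exact hη x (by simp [hx, hxa])
    · refine .head (h η a) (ih _ fun x hx => ?_)
      by_cases hxa : x = a
      · subst hxa
        simpa [Bool.eq_not_iff] using ha
      · rw [update_of_ne hxa]
        exact hη x (by simp [hx, hxa])

theorem isIrreducibleGenerator_genOfRate (hr : ∀ η x, 0 < r η x) :
    IsIrreducibleGenerator (genOfRate r) where
  nonneg_of_ne η ξ h := by
    rw [genOfRate_apply_of_ne (Ne.symm h)]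
    exact sum_nonneg fun x _ => by split_ifs <;> simp [(hr η x).le]
  sum_row := sum_genOfRate_row
  reachable := reflTransGen_of_flip fun η x => by
    rw [genOfRate_apply_of_ne (update_not_ne_self η x)]
    exact sum_pos' (fun y _ => by split_ifs <;> simp [(hr η y).le]) ⟨x, mem_univ x, by simp [hr]⟩

theorem genOfRate_comp_equiv (e : V ≃ V) (hr : ∀ η x, r (η ∘ e) x = r η (e x))
    (η ξ : V → Bool) : genOfRate r (η ∘ e) (ξ ∘ e) = genOfRate r η ξ := by
  have hcomp (ζ ζ' : V → Bool) : ζ ∘ e = ζ' ∘ e ↔ ζ = ζ' :=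
    e.surjective.injective_comp_right.eq_iff
  have hupd (x : V) : update (η ∘ e) x (!(η ∘ e) x) = update η (e x) (!η (e x)) ∘ e :=
    (update_comp_eq_of_injective η e.injective x _).symm
  simp only [genOfRate, hupd, hcomp, hr]
  rw [e.sum_comp (fun y => if ξ = update η y (!η y) then r η y else 0), e.sum_comp (r η)]

end SpinSystem

section NoisyVoter

variable {V : Type} [Fintype V] [DecidableEq V] {q : V → V → ℝ}

theorem voterRate_pos (hq : ∀ x y, 0 ≤ q x y) (η : V → Bool) (x : V) : 0 < voterRate q η x := by
  have : 0 ≤ ∑ y with y ≠ x, q x y * (if η y ≠ η x then 1 else 0) :=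
    sum_nonneg fun y _ => mul_nonneg (hq x y) (by split_ifs <;> norm_num)
  rw [voterRate]
  linarith

theorem voterRate_comp_equiv (e : V ≃ V) (hq : ∀ x y, q (e x) (e y) = q x y) (η : V → Bool)
    (x : V) : voterRate q (η ∘ e) x = voterRate q η (e x) := by
  rw [voterRate, voterRate, sum_filter, sum_filter]
  congr 1
  exact Fintype.sum_equiv e _ _ fun y => by simp [hq, e.injective.ne_iff]

theorem isIrreducibleGenerator_voterGen (hq : ∀ x y, 0 ≤ q x y) :
    IsIrreducibleGenerator (voterGen q) :=
  isIrreducibleGenerator_genOfRate (voterRate_pos hq)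

theorem voterGen_comp_equiv (e : V ≃ V) (hq : ∀ x y, q (e x) (e y) = q x y) (η ξ : V → Bool) :
    voterGen q (η ∘ e) (ξ ∘ e) = voterGen q η ξ :=
  genOfRate_comp_equiv e (voterRate_comp_equiv e hq) η ξ

theorem voterP_comp_equiv (e : V ≃ V) (hq : ∀ x y, q (e x) (e y) = q x y) (t : ℝ)
    (η ξ : V → Bool) : voterP q t (η ∘ e) (ξ ∘ e) = voterP q t η ξ :=
  exp_smul_apply_equiv (e.symm.arrowCongr (.refl Bool)) (voterGen_comp_equiv e hq) t η ξ

theorem IsStationaryNVM.vecMul_eq_zero {μ : (V → Bool) → ℝ} (hμ : IsStationaryNVM q μ) :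
    μ ᵥ* voterGen q = 0 :=
  funext hμ.2.2

theorem IsStationaryNVM.apply_comp_equiv {μ : (V → Bool) → ℝ} (hμ : IsStationaryNVM q μ)
    (hq₀ : ∀ x y, 0 ≤ q x y) (e : V ≃ V) (hq : ∀ x y, q (e x) (e y) = q x y) (η : V → Bool) :
    μ (η ∘ e) = μ η :=
  (isIrreducibleGenerator_voterGen hq₀).apply_equiv_of_vecMul_eq_zero
    (e.symm.arrowCongr (.refl Bool)) (voterGen_comp_equiv e hq) hμ.vecMul_eq_zero hμ.2.1 η

end NoisyVoter

namespace StarGraph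

open Function

variable {n : ℕ}

theorem starQ_nonneg (x y : Option (Fin n)) : 0 ≤ starQ n x y := by
  cases x <;> cases y <;> simp [starQ]

theorem starQ_optionCongr (σ : Equiv.Perm (Fin n)) (x y : Option (Fin n)) :
    starQ n (σ.optionCongr x) (σ.optionCongr y) = starQ n x y := by
  cases x <;> cases y <;> rfl

theorem voterRate_starQ_none (η : Option (Fin n) → Bool) :
    voterRate (starQ n) η none = 1 / 2 + (∑ i, if η (some i) ≠ η none then 1 else 0) / n := by
  simp [voterRate, sum_filter, Fintype.sum_option, starQ, div_eq_inv_mul, mul_sum]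

theorem voterRate_starQ_some (η : Option (Fin n) → Bool) (i : Fin n) :
    voterRate (starQ n) η (some i) = 1 / 2 + if η none ≠ η (some i) then 1 else 0 := by
  simp [voterRate, sum_filter, Fintype.sum_option, starQ]

def leafCount (η : Option (Fin n) → Bool) : ℕ :=
  #{i | η (some i)}

theorem leafCount_le (η : Option (Fin n) → Bool) : leafCount η ≤ n :=
  (card_filter_le _ _).trans_eq (card_fin n)

def lump (η : Option (Fin n) → Bool) : Bool × Fin (n + 1) :=
  (η none, ⟨leafCount η, Nat.lt_succ_of_le (leafCount_le η)⟩)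

theorem lump_eq_iff {η : Option (Fin n) → Bool} {c : Bool} {m : Fin (n + 1)} :
    lump η = (c, m) ↔ η none = c ∧ leafCount η = m := by
  simp [lump, Fin.ext_iff]

theorem lump_surjective : Surjective (lump (n := n)) := by
  rintro ⟨b, k⟩
  refine ⟨fun x => x.elim b fun i => decide ((i : ℕ) < k), lump_eq_iff.2 ⟨rfl, ?_⟩⟩
  simp [leafCount, Fin.card_filter_val_lt, Nat.le_of_lt_succ k.2]

theorem sum_comp_leaf (η : Option (Fin n) → Bool) (g : Bool → ℝ) :
    ∑ i, g (η (some i)) = leafCount η * g true + (n - leafCount η) * g false := by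
  have hsplit := card_filter_add_card_filter_not (s := univ) (fun i : Fin n => η (some i) = true)
  rw [card_univ, Fintype.card_fin] at hsplit
  have hfalse : (#{i | ¬η (some i) = true} : ℝ) = n - leafCount η := by
    rw [eq_sub_iff_add_eq, add_comm]
    exact_mod_cast hsplit
  have hg (i : Fin n) : g (η (some i)) = if η (some i) = true then g true else g false := by
    cases η (some i) <;> rfl
  rw [sum_congr rfl fun i _ => hg i, sum_ite, sum_const, sum_const, nsmul_eq_mul, nsmul_eq_mul,
    hfalse, leafCount]

theorem exists_perm_of_lump_eq {η ξ : Option (Fin n) → Bool} (h : lump η = lump ξ) :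
    ∃ σ : Equiv.Perm (Fin n), ξ = η ∘ σ.optionCongr := by
  obtain ⟨hcenter, hcount⟩ := Prod.ext_iff.1 h
  have hcount : #{i | η (some i)} = #{i | ξ (some i)} := congrArg Fin.val hcount
  have hfiber (c : Bool) :
      Fintype.card {i // ξ (some i) = c} = Fintype.card {i // η (some i) = c} := by
    have hη := card_filter_add_card_filter_not (s := univ) (fun i : Fin n => η (some i) = true)
    have hξ := card_filter_add_card_filter_not (s := univ) (fun i : Fin n => ξ (some i) = true)
    cases c <;> simp only [Fintype.card_subtype, Bool.not_eq_true] at hη hξ ⊢ <;> omega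
  let e (c : Bool) := Fintype.equivOfCardEq (hfiber c)
  refine ⟨Equiv.ofFiberEquiv e, funext fun x => ?_⟩
  cases x with
  | none => exact hcenter.symm
  | some i => exact (Equiv.ofFiberEquiv_map (g := fun i => η (some i)) e i).symm

theorem leafCount_update_none (η : Option (Fin n) → Bool) (v : Bool) :
    leafCount (update η none v) = leafCount η := by
  simp [leafCount]

theorem leafCount_flip_some (η : Option (Fin n) → Bool) (i : Fin n) :
    leafCount (update η (some i) (!η (some i))) + (if η (some i) then 1 else 0)
      = leafCount η + (if η (some i) then 0 else 1) := by
  have hfilter (v : Bool) : univ.filter (fun j => update η (some i) v (some j) = true)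
      = (univ.filter fun j => η (some j) = true).erase i ∪ if v then {i} else ∅ := by
    ext j
    by_cases hj : j = i
    · subst hj; cases v <;> simp
    · cases v <;> simp [update_apply, hj]
  have hmem : i ∈ univ.filter (fun j => η (some j) = true) ↔ η (some i) := by simp
  cases h : η (some i) <;> simp only [leafCount, hfilter, h] at hmem ⊢
  · simp [card_insert_of_notMem, hmem]
  · simpa using card_erase_add_one (hmem.2 trivial)

theorem lump_flip_none_eq_iff {η : Option (Fin n) → Bool} {c : Bool} {m : Fin (n + 1)} :
    lump (update η none (!η none)) = (c, m) ↔ c = !η none ∧ (m : ℕ) = leafCount η := by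
  rw [lump_eq_iff, leafCount_update_none, update_self]
  exact and_congr eq_comm eq_comm

theorem lump_flip_some_eq_iff {η : Option (Fin n) → Bool} {i : Fin n} {c : Bool}
    {m : Fin (n + 1)} :
    lump (update η (some i) (!η (some i))) = (c, m) ↔
      c = η none ∧
        if η (some i) then (m : ℕ) + 1 = leafCount η else (m : ℕ) = leafCount η + 1 := by
  rw [lump_eq_iff, update_of_ne (Option.some_ne_none i).symm, eq_comm (a := η none)]
  refine and_congr_right fun _ => ?_
  have hcount := leafCount_flip_some η i
  revert hcount
  cases η (some i) <;> simp only [if_true, if_false, Bool.false_eq_true] <;> omega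

theorem pushforward_voterGen_lump_of_ne {η : Option (Fin n) → Bool} {s : Bool × Fin (n + 1)}
    (hs : lump η ≠ s) : pushforward lump (voterGen (starQ n) η) s = reducedRate n (lump η) s := by
  obtain ⟨c, m⟩ := s
  rw [voterGen, pushforward_genOfRate_of_ne hs, Fintype.sum_option]
  simp only [lump_flip_none_eq_iff, lump_flip_some_eq_iff, voterRate_starQ_none,
    voterRate_starQ_some]
  rw [sum_comp_leaf η fun d => if d ≠ η none then 1 else 0,
    sum_comp_leaf η fun d =>
      if c = η none ∧ if d then (m : ℕ) + 1 = leafCount η else (m : ℕ) = leafCount η + 1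
      then 1 / 2 + if η none ≠ d then 1 else 0 else 0]
  -- Both sides now depend on `η` only through `η none` and `leafCount η`.
  replace hs : ¬(η none = c ∧ leafCount η = m) := fun h => hs (lump_eq_iff.2 h)
  change _ = reducedRate n (η none, (lump η).2) (c, m)
  simp only [show leafCount η = ((lump η).2 : ℕ) from rfl] at hs ⊢
  generalize η none = b at hs ⊢
  generalize (lump η).2 = k at hs ⊢
  unfold reducedRate
  cases b <;> cases c <;> simp [Fin.ext_iff, eq_comm (a := (m : ℕ))] at hs ⊢ <;> split_ifs <;>
    first | omega | ring

theorem reducedGen_apply_of_ne {s u : Bool × Fin (n + 1)} (h : s ≠ u) :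
    reducedGen n s u = reducedRate n s u :=
  if_neg h

theorem sum_reducedGen_row (s : Bool × Fin (n + 1)) : ∑ u, reducedGen n s u = 0 := by
  have h (u) :
      reducedGen n s u = reducedRate n s u - if s = u then ∑ v, reducedRate n s v else 0 := by
    unfold reducedGen
    split_ifs with hsu
    · subst hsu
      simp [reducedRate]
    · ring
  simp [h, sum_sub_distrib]

theorem voterGen_mul_fiberMatrix_lump :
    voterGen (starQ n) * fiberMatrix lump = fiberMatrix lump * reducedGen n := by
  funext η
  refine (mul_fiberMatrix_apply _ η).trans <| .trans ?_ (fiberMatrix_mul_apply _ η).symm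
  refine eq_of_sum_eq_of_forall_ne (lump η) ?_ fun u hu => ?_
  · rw [sum_pushforward, voterGen, sum_genOfRate_row, sum_reducedGen_row]
  · rw [pushforward_voterGen_lump_of_ne hu.symm, reducedGen_apply_of_ne hu.symm]

theorem isIrreducibleGenerator_reducedGen : IsIrreducibleGenerator (reducedGen n) :=
  (isIrreducibleGenerator_voterGen starQ_nonneg).of_mul_fiberMatrix lump_surjective
    voterGen_mul_fiberMatrix_lump

theorem apply_eq_of_lump_eq {f : (Option (Fin n) → Bool) → ℝ}
    (hf : ∀ η (σ : Equiv.Perm (Fin n)), f (η ∘ σ.optionCongr) = f η)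
    (η ξ : Option (Fin n) → Bool) (h : lump η = lump ξ) : f η = f ξ := by
  obtain ⟨σ, rfl⟩ := exists_perm_of_lump_eq h
  exact (hf η σ).symm

theorem lump_const_true : lump (fun _ : Option (Fin n) => true) = (true, Fin.last n) := by
  simp [lump, leafCount, Fin.ext_iff]

end StarGraph

theorem stmt_15_general (n : ℕ) (t : ℝ)
    (μinf : (Option (Fin n) → Bool) → ℝ) (hμ : IsStationaryNVM (starQ n) μinf)
    (π : Bool × Fin (n + 1) → ℝ) (hπ : IsStationaryReduced n π) :
    tvDist (voterP (starQ n) t (fun _ => true)) μinf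
      = tvDist (reducedP n t (true, Fin.last n)) π := by
  open StarGraph in
  have hrow :
      pushforward lump (voterP (starQ n) t fun _ => true) = reducedP n t (true, Fin.last n) := by
    rw [← lump_const_true]
    exact pushforward_exp_smul_apply voterGen_mul_fiberMatrix_lump t _
  have hπ' : pushforward lump μinf = π :=
    isIrreducibleGenerator_reducedGen.eq_of_vecMul_eq_zero
      (vecMul_pushforward_eq_zero voterGen_mul_fiberMatrix_lump hμ.vecMul_eq_zero) (funext hπ.2.2)
      (by rw [sum_pushforward, hμ.2.1]) hπ.2.1
  rw [← hrow, ← hπ', tvDist_pushforward]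
  · exact apply_eq_of_lump_eq fun η σ =>
      voterP_comp_equiv _ (starQ_optionCongr σ) t (fun _ => true) η
  · exact apply_eq_of_lump_eq fun η σ =>
      hμ.apply_comp_equiv starQ_nonneg _ (starQ_optionCongr σ) η

/-- **Projection identity in the proof of Theorem 2(ii) of Cox–Peres–Steif.** The total
variation distance to stationarity of the noisy voter model on the `n`-star started from all
ones equals that of the reduced chain (center state, number of leaves in state 1) started
from `(1, n)`. -/
theorem stmt_15 (n : ℕ) (hn : 1 ≤ n) (t : ℝ) (ht : 0 ≤ t)
    (μinf : (Option (Fin n) → Bool) → ℝ) (hμ : IsStationaryNVM (starQ n) μinf)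
    (π : Bool × Fin (n + 1) → ℝ) (hπ : IsStationaryReduced n π) :
    tvDist (voterP (starQ n) t (fun _ => true)) μinf
      = tvDist (reducedP n t (true, Fin.last n)) π :=
  stmt_15_general n t μinf hμ π hπ
end

section
/- There exist a constant c > 0 and N such that for all n ≥ N, the noisy voter model on the n-star with voting rates q(x, center) = c for each leaf x and q(center, x) = c/n for each leaf x satisfies max_{η ∈ {0,1}^S} ‖μ^η_{(log n)/3} − μ_∞‖_TV ≤ 1/4; that is, its mixing time is at most (log n)/3, which is strictly smaller than (1/2)·log n. (This shows that the cutoff lower bound of the main theorem can fail when the stationary distributions of the voting chains are far from uniform, even with bounded rates.) -/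
open scoped BigOperators

/-!
Couple two copies of the noisy voter model by letting them use the same noise and voting
events. Then `‖P^t(η, ·) - P^t(ζ, ·)‖_TV` is at most the probability that the coupled copies
still differ at time `t`, and averaging over `ζ ∼ μ_∞` bounds the distance to stationarity.

On the star with `c = 15`, the pair (does the centre disagree, number `k` of disagreeing leaves)
is itself a Markov chain. Two test functions of it control the coupling: `n·[centre disagrees] + k`
is an eigenfunction with eigenvalue `-1`, and the function equal to `k^{1/4}` when the centre
agrees and to `-16 n^{1/4} k / n` otherwise is a supersolution with rate `4`. A combination of
the two dominates the indicator that the copies differ, so the distance at time `t` is at most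
`2 (1 + 16 n^{1/4}) e^{-t} + n^{1/4} e^{-4t}`, which is below `1/4` at `t = (log n)/3` once
`n ≥ 140^12`.
-/

open Matrix Finset
open scoped Nat

namespace Matrix

variable {ι κ : Type*} [Fintype ι] [DecidableEq ι] [Fintype κ] [DecidableEq κ]

theorem hasSum_map_exp {X : Type*} [AddCommGroup X] [Module ℝ X] [TopologicalSpace X]
    [IsTopologicalAddGroup X] [ContinuousSMul ℝ X] (L : Matrix ι ι ℝ →ₗ[ℝ] X)
    (A : Matrix ι ι ℝ) :
    HasSum (fun m => (m !⁻¹ : ℝ) • L (A ^ m)) (L (NormedSpace.exp A)) := by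
  let _ := Matrix.linftyOpNormedRing (n := ι) (α := ℝ)
  let _ := Matrix.linftyOpNormedAlgebra (n := ι) (R := ℝ) (α := ℝ)
  have h := (NormedSpace.exp_series_hasSum_exp' (𝕂 := ℝ) A).map L L.continuous_of_finiteDimensional
  simp only [Function.comp_def, map_smul] at h
  exact h

theorem exp_mul_eq_mul_exp_of_mul_eq_mul {B : Matrix κ κ ℝ} {A : Matrix ι ι ℝ}
    {E : Matrix κ ι ℝ} (h : B * E = E * A) :
    NormedSpace.exp B * E = E * NormedSpace.exp A := by
  have hpow (m : ℕ) : B ^ m * E = E * A ^ m := by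
    induction m with
    | zero => simp
    | succ m ih => rw [pow_succ, pow_succ, Matrix.mul_assoc, h, ← Matrix.mul_assoc, ih,
        Matrix.mul_assoc]
  have hB := hasSum_map_exp (mulRightLinearMap κ ℝ E) B
  have hA := hasSum_map_exp (mulLeftLinearMap ι ℝ E) A
  simp only [mulRightLinearMap_apply, mulLeftLinearMap_apply, hpow] at hA hB
  exact hB.unique hA

theorem vecMul_exp_eq_self {A : Matrix ι ι ℝ} {u : ι → ℝ} (h : u ᵥ* A = 0) :
    u ᵥ* NormedSpace.exp A = u := by
  -- as a `Unit × ι` matrix, the row vector `u` intertwines `0` with `A`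
  have hrow : (0 : Matrix Unit Unit ℝ) * replicateRow Unit u = replicateRow Unit u * A := by
    rw [Matrix.zero_mul, ← replicateRow_vecMul, h]; rfl
  have := congr_fun₂ (exp_mul_eq_mul_exp_of_mul_eq_mul hrow) ()
  funext i
  simpa [NormedSpace.exp_zero, ← replicateRow_vecMul] using (this i).symm

theorem exp_apply_nonneg {A : Matrix ι ι ℝ} (hA : ∀ i j, 0 ≤ A i j) (i j : ι) :
    0 ≤ NormedSpace.exp A i j :=
  (hasSum_map_exp (entryLinearMap ℝ ℝ i j) A).nonneg fun m => by
    simpa using mul_nonneg (by positivity) (pow_apply_nonneg hA m i j)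

omit [DecidableEq ι] in
theorem mulVec_le_mulVec_of_nonneg {M : Matrix ι ι ℝ} (hM : ∀ i j, 0 ≤ M i j) {v w : ι → ℝ}
    (hvw : ∀ j, v j ≤ w j) (i : ι) : (M *ᵥ v) i ≤ (M *ᵥ w) i :=
  sum_le_sum fun j _ => mul_le_mul_of_nonneg_left (hvw j) (hM i j)

theorem exp_mulVec_le_of_nonneg {B : Matrix ι ι ℝ} (hB : ∀ i j, 0 ≤ B i j) {v : ι → ℝ}
    {c : ℝ} (hc : 0 ≤ c) (hv : ∀ i, (B *ᵥ v) i ≤ c * v i) (i : ι) :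
    (NormedSpace.exp B *ᵥ v) i ≤ Real.exp c * v i := by
  have hpow (m : ℕ) : ∀ i, (B ^ m *ᵥ v) i ≤ c ^ m * v i := by
    induction m with
    | zero => simp
    | succ m ih =>
      intro i
      calc (B ^ (m + 1) *ᵥ v) i = (B ^ m *ᵥ (B *ᵥ v)) i := by rw [pow_succ, mulVec_mulVec]
        _ ≤ (B ^ m *ᵥ (c • v)) i := mulVec_le_mulVec_of_nonneg (pow_apply_nonneg hB m) hv i
        _ = c * (B ^ m *ᵥ v) i := by rw [mulVec_smul, Pi.smul_apply, smul_eq_mul]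
        _ ≤ c ^ (m + 1) * v i := by rw [pow_succ', mul_assoc]; gcongr; exact ih i
  let L : Matrix ι ι ℝ →ₗ[ℝ] ℝ :=
    { toFun := fun M => (M *ᵥ v) i
      map_add' := fun M N => by simp [add_mulVec]
      map_smul' := fun r M => by simp [smul_mulVec] }
  have hexp := (NormedSpace.exp_series_hasSum_exp' (𝕂 := ℝ) c).mul_right (v i)
  rw [← Real.exp_eq_exp_ℝ] at hexp
  refine hasSum_le (fun m => ?_) (hasSum_map_exp L B) hexp
  simp only [L, LinearMap.coe_mk, AddHom.coe_mk, smul_eq_mul, mul_assoc]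
  exact mul_le_mul_of_nonneg_left (hpow m i) (by positivity)

theorem exp_smul_one (c : ℝ) :
    NormedSpace.exp (c • (1 : Matrix ι ι ℝ)) = Real.exp c • (1 : Matrix ι ι ℝ) := by
  let _ := Matrix.linftyOpNormedRing (n := ι) (α := ℝ)
  let _ := Matrix.linftyOpNormedAlgebra (n := ι) (R := ℝ) (α := ℝ)
  have h := NormedSpace.algebraMap_exp_comm (𝕂 := ℝ) (𝔸 := Matrix ι ι ℝ) c
  rw [Algebra.algebraMap_eq_smul_one, Algebra.algebraMap_eq_smul_one, ← Real.exp_eq_exp_ℝ] at h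
  exact h.symm

theorem exp_smul_eq_smul_exp_add_smul_one (A : Matrix ι ι ℝ) (t r : ℝ) :
    NormedSpace.exp (t • A) = Real.exp (-(t * r)) • NormedSpace.exp (t • (A + r • 1)) := by
  have hsplit : t • A = t • (A + r • 1) + (-(t * r)) • (1 : Matrix ι ι ℝ) := by
    rw [smul_add, smul_smul, neg_smul, add_neg_cancel_right]
  rw [hsplit, exp_add_of_commute _ _ ((Commute.one_right _).smul_right _), exp_smul_one,
    Matrix.mul_smul, Matrix.mul_one]

variable {A : Matrix ι ι ℝ} {t : ℝ}

omit [Fintype ι] in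
theorem smul_add_smul_one_nonneg (hA : ∀ i j, i ≠ j → 0 ≤ A i j) (ht : 0 ≤ t) {r : ℝ}
    (hr : ∀ k, -A k k ≤ r) (i j : ι) : 0 ≤ (t • (A + r • 1)) i j := by
  refine mul_nonneg ht ?_
  rcases eq_or_ne i j with rfl | hij
  · simpa [add_comm, neg_le_iff_add_nonneg] using hr i
  · simpa [one_apply_ne hij] using hA i j hij

theorem exp_smul_apply_nonneg (hA : ∀ i j, i ≠ j → 0 ≤ A i j) (ht : 0 ≤ t) (i j : ι) :
    0 ≤ NormedSpace.exp (t • A) i j := by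
  obtain ⟨r, hr⟩ := Finite.exists_le fun k => -A k k
  rw [exp_smul_eq_smul_exp_add_smul_one A t r, smul_apply, smul_eq_mul]
  exact mul_nonneg (Real.exp_nonneg _) (exp_apply_nonneg (smul_add_smul_one_nonneg hA ht hr) i j)

theorem exp_smul_mulVec_le (hA : ∀ i j, i ≠ j → 0 ≤ A i j) (ht : 0 ≤ t) {v : ι → ℝ} {lam : ℝ}
    (hv : ∀ i, (A *ᵥ v) i ≤ -lam * v i) (i : ι) :
    (NormedSpace.exp (t • A) *ᵥ v) i ≤ Real.exp (-lam * t) * v i := by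
  obtain ⟨r₀, hr₀⟩ := Finite.exists_le fun k => -A k k
  set r := max r₀ lam
  have hr : ∀ k, -A k k ≤ r := fun k => (hr₀ k).trans (le_max_left _ _)
  have hB : ∀ i, ((t • (A + r • 1)) *ᵥ v) i ≤ (t * (r - lam)) * v i := fun i => by
    rw [smul_mulVec, add_mulVec, smul_mulVec, one_mulVec]
    simp only [Pi.smul_apply, Pi.add_apply, smul_eq_mul]
    nlinarith [hv i]
  have hc : 0 ≤ t * (r - lam) := mul_nonneg ht (sub_nonneg.mpr (le_max_right _ _))
  rw [exp_smul_eq_smul_exp_add_smul_one A t r, smul_mulVec, Pi.smul_apply, smul_eq_mul]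
  calc Real.exp (-(t * r)) * (NormedSpace.exp (t • (A + r • 1)) *ᵥ v) i
      ≤ Real.exp (-(t * r)) * (Real.exp (t * (r - lam)) * v i) := by
        gcongr
        exact exp_mulVec_le_of_nonneg (smul_add_smul_one_nonneg hA ht hr) hc hB i
    _ = Real.exp (-lam * t) * v i := by rw [← mul_assoc, ← Real.exp_add]; ring_nf

theorem one_submatrix_mulVec {ι' : Type*} (π : ι' → ι) (f : ι → ℝ) :
    (1 : Matrix ι ι ℝ).submatrix π id *ᵥ f = f ∘ π := by
  funext ω
  simp [mulVec, dotProduct, one_apply]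

end Matrix

section JumpChain

variable {Ω Ω' ι : Type*} [Fintype Ω] [DecidableEq Ω] [Fintype Ω'] [DecidableEq Ω'] [Fintype ι]

noncomputable def jumpGen (rate : ι → ℝ) (act : ι → Ω → Ω) : Matrix Ω Ω ℝ :=
  ∑ i, rate i • ((1 : Matrix Ω Ω ℝ).submatrix (act i) id - 1)

theorem jumpGen_mulVec (rate : ι → ℝ) (act : ι → Ω → Ω) (f : Ω → ℝ) (ω : Ω) :
    (jumpGen rate act *ᵥ f) ω = ∑ i, rate i * (f (act i ω) - f ω) := by
  simp [jumpGen, sum_mulVec, smul_mulVec, sub_mulVec, one_submatrix_mulVec, Finset.sum_apply]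

omit [Fintype Ω] in
theorem jumpGen_apply_nonneg {rate : ι → ℝ} (hrate : ∀ i, 0 ≤ rate i) (act : ι → Ω → Ω)
    {ω ω' : Ω} (h : ω ≠ ω') : 0 ≤ jumpGen rate act ω ω' := by
  simp only [jumpGen, Matrix.sum_apply, Matrix.smul_apply, Matrix.sub_apply, submatrix_apply,
    one_apply_ne h, sub_zero, smul_eq_mul]
  exact sum_nonneg fun i _ => mul_nonneg (hrate i) (by rw [one_apply]; positivity)

theorem jumpGen_mul_submatrix_one {rate : ι → ℝ} {act : ι → Ω → Ω} {act' : ι → Ω' → Ω'}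
    {π : Ω' → Ω} (hπ : ∀ i ω, π (act' i ω) = act i (π ω)) :
    jumpGen rate act' * (1 : Matrix Ω Ω ℝ).submatrix π id
      = (1 : Matrix Ω Ω ℝ).submatrix π id * jumpGen rate act := by
  refine ext_iff_mulVec.mpr fun f => funext fun ω => ?_
  simp only [← mulVec_mulVec, one_submatrix_mulVec, jumpGen_mulVec, Function.comp_apply, hπ]

end JumpChain

section TotalVariation

variable {S : Type} [Fintype S]

theorem tvDist_sum_smul_le {κ : Type*} (s : Finset κ) {w : κ → ℝ} (hw : ∀ k ∈ s, 0 ≤ w k)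
    (u v : κ → S → ℝ) :
    tvDist (∑ k ∈ s, w k • u k) (∑ k ∈ s, w k • v k) ≤ ∑ k ∈ s, w k * tvDist (u k) (v k) := by
  have hpoint (x : S) : |∑ k ∈ s, w k * u k x - ∑ k ∈ s, w k * v k x|
      ≤ ∑ k ∈ s, w k * |u k x - v k x| := by
    rw [← sum_sub_distrib]
    refine (abs_sum_le_sum_abs _ _).trans_eq (sum_congr rfl fun k hk => ?_)
    rw [← mul_sub, abs_mul, abs_of_nonneg (hw k hk)]
  simp only [tvDist, Finset.sum_apply, Pi.smul_apply, smul_eq_mul, mul_sum]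
  rw [sum_comm]
  exact sum_le_sum fun x _ => by
    simpa only [mul_sum, mul_left_comm] using mul_le_mul_of_nonneg_left (hpoint x) one_half_pos.le

theorem tvDist_one_one [DecidableEq S] (a b : S) :
    tvDist ((1 : Matrix S S ℝ) a) ((1 : Matrix S S ℝ) b) = if a = b then 0 else 1 := by
  split_ifs with hab
  · subst hab; simp [tvDist]
  · have hterm (s : S) : |(1 : Matrix S S ℝ) a s - (1 : Matrix S S ℝ) b s|
        = (1 : Matrix S S ℝ) a s + (1 : Matrix S S ℝ) b s := by
      by_cases has : a = s <;> by_cases hbs : b = s <;> simp_all [one_apply]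
    rw [tvDist, sum_congr rfl fun s _ => hterm s, sum_add_distrib]
    simp only [one_apply, sum_ite_eq, mem_univ, if_true]
    norm_num

theorem tvDist_le_of_coupling [DecidableEq S] {P : Matrix S S ℝ} {P₂ : Matrix (S × S) (S × S) ℝ}
    (hP₂ : ∀ ω ω', 0 ≤ P₂ ω ω')
    (h₁ : P₂ * (1 : Matrix S S ℝ).submatrix Prod.fst id
      = (1 : Matrix S S ℝ).submatrix Prod.fst id * P)
    (h₂ : P₂ * (1 : Matrix S S ℝ).submatrix Prod.snd id
      = (1 : Matrix S S ℝ).submatrix Prod.snd id * P) (η ζ : S) :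
    tvDist (P η) (P ζ) ≤ (P₂ *ᵥ fun ω => if ω.1 = ω.2 then 0 else 1) (η, ζ) := by
  have hrow (π : S × S → S) (h : P₂ * (1 : Matrix S S ℝ).submatrix π id
      = (1 : Matrix S S ℝ).submatrix π id * P) :
      P (π (η, ζ)) = ∑ ω, P₂ (η, ζ) ω • (1 : Matrix S S ℝ) (π ω) := by
    funext ξ
    have := congr_fun₂ h (η, ζ) ξ
    simp only [mul_apply, submatrix_apply, id, one_apply, ite_mul, one_mul, zero_mul,
      sum_ite_eq, mem_univ, if_true] at this
    simpa [Finset.sum_apply, one_apply] using this.symm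
  rw [hrow Prod.fst h₁, hrow Prod.snd h₂]
  refine (tvDist_sum_smul_le _ (fun ω _ => hP₂ _ ω) _ _).trans_eq ?_
  simp only [tvDist_one_one, mulVec, dotProduct]

theorem tvDist_le_of_vecMul_eq_self {P : Matrix S S ℝ} {μ : S → ℝ} (hμ₀ : ∀ s, 0 ≤ μ s)
    (hμ₁ : ∑ s, μ s = 1) (hμP : μ ᵥ* P = μ) {η : S} {K : ℝ}
    (hK : ∀ ζ, tvDist (P η) (P ζ) ≤ K) : tvDist (P η) μ ≤ K := by
  have hη : P η = ∑ ζ, μ ζ • P η := by rw [← sum_smul, hμ₁, one_smul]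
  rw [← hμP, vecMul_eq_sum]
  nth_rw 1 [hη]
  calc tvDist (∑ ζ, μ ζ • P η) (∑ ζ, μ ζ • P ζ) ≤ ∑ ζ, μ ζ * tvDist (P η) (P ζ) :=
        tvDist_sum_smul_le _ (fun ζ _ => hμ₀ ζ) _ _
    _ ≤ ∑ ζ, μ ζ * K := by gcongr with ζ; exacts [hμ₀ ζ, hK ζ]
    _ = K := by rw [← sum_mul, hμ₁, one_mul]

end TotalVariation

section NoisyVoter

variable {V : Type} [Fintype V] [DecidableEq V]

noncomputable def voterEventRate (q : V → V → ℝ) : V × (Bool ⊕ V) → ℝ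
  | (_, .inl _) => 1 / 2
  | (x, .inr y) => q x y

def voterEventAct : V × (Bool ⊕ V) → (V → Bool) → V → Bool
  | (x, .inl b), η => Function.update η x b
  | (x, .inr y), η => Function.update η x (η y)

theorem voterGen_mulVec (q : V → V → ℝ) (f : (V → Bool) → ℝ) (η : V → Bool) :
    (voterGen q *ᵥ f) η = ∑ x, voterRate q η x * (f (Function.update η x (!η x)) - f η) := by
  simp only [voterGen, genOfRate, mulVec, dotProduct, sub_mul, sum_sub_distrib, sum_mul, ite_mul,
    zero_mul]
  rw [sum_comm]
  simp [mul_sub, sum_sub_distrib]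

omit [Fintype V] in
theorem sub_update_eq (f : (V → Bool) → ℝ) (η : V → Bool) (x : V) (b : Bool) :
    f (Function.update η x b) - f η
      = (if b = η x then 0 else 1) * (f (Function.update η x (!η x)) - f η) := by
  by_cases hb : b = η x
  · subst hb; simp
  · rw [show b = !η x by cases b <;> cases h : η x <;> simp_all]
    simp

theorem voterGen_eq_jumpGen (q : V → V → ℝ) :
    voterGen q = jumpGen (voterEventRate q) voterEventAct := by
  refine ext_iff_mulVec.mpr fun f => funext fun η => ?_
  rw [voterGen_mulVec, jumpGen_mulVec, Fintype.sum_prod_type]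
  refine sum_congr rfl fun x _ => ?_
  have hnoise : (1 / 2 : ℝ) * (if true = η x then 0 else 1)
      + 1 / 2 * (if false = η x then 0 else 1) = 1 / 2 := by
    cases η x <;> norm_num
  have hvote : ∑ y, q x y * (if η y = η x then 0 else 1)
      = ∑ y ∈ univ.filter (· ≠ x), q x y * (if η y ≠ η x then 1 else 0) := by
    rw [sum_filter, ← sum_erase_add _ _ (mem_univ x), ← sum_erase_add _ _ (mem_univ x)]
    simp only [ne_eq, not_true_eq_false, if_false, if_true, mul_zero, add_zero]
    refine sum_congr rfl fun y hy => ?_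
    rw [if_pos (ne_of_mem_erase hy)]
    split_ifs <;> simp_all
  simp only [Fintype.sum_sum_type, Fintype.sum_bool, voterEventRate, voterEventAct,
    sub_update_eq f η x true, sub_update_eq f η x false, fun y => sub_update_eq f η x (η y)]
  simp only [← mul_assoc, ← sum_mul, ← add_mul, hnoise, hvote, voterRate]

-- The basic coupling: both copies are driven by the same noise and voting events.
noncomputable def coupledVoterGen (q : V → V → ℝ) :
    Matrix ((V → Bool) × (V → Bool)) ((V → Bool) × (V → Bool)) ℝ :=
  jumpGen (voterEventRate q) fun e => Prod.map (voterEventAct e) (voterEventAct e)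

omit [Fintype V] [DecidableEq V] in
theorem voterEventRate_nonneg {q : V → V → ℝ} (hq : ∀ x y, 0 ≤ q x y)
    (e : V × (Bool ⊕ V)) : 0 ≤ voterEventRate q e := by
  rcases e with ⟨x, b | y⟩
  exacts [one_half_pos.le, hq x y]

theorem coupledVoterGen_apply_nonneg {q : V → V → ℝ} (hq : ∀ x y, 0 ≤ q x y)
    {ω ω' : (V → Bool) × (V → Bool)} (h : ω ≠ ω') : 0 ≤ coupledVoterGen q ω ω' :=
  jumpGen_apply_nonneg (voterEventRate_nonneg hq) _ h

theorem tvDist_voterP_le {q : V → V → ℝ} (hq : ∀ x y, 0 ≤ q x y) {t : ℝ} (ht : 0 ≤ t)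
    (η ζ : V → Bool) :
    tvDist (voterP q t η) (voterP q t ζ)
      ≤ (NormedSpace.exp (t • coupledVoterGen q) *ᵥ fun ω => if ω.1 = ω.2 then 0 else 1)
          (η, ζ) := by
  have hmarginal (π : (V → Bool) × (V → Bool) → V → Bool)
      (hπ : ∀ e ω, π (Prod.map (voterEventAct e) (voterEventAct e) ω) = voterEventAct e (π ω)) :
      NormedSpace.exp (t • coupledVoterGen q) * (1 : Matrix _ _ ℝ).submatrix π id
        = (1 : Matrix _ _ ℝ).submatrix π id * voterP q t := by
    refine exp_mul_eq_mul_exp_of_mul_eq_mul ?_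
    rw [Matrix.smul_mul, Matrix.mul_smul, coupledVoterGen, voterGen_eq_jumpGen,
      jumpGen_mul_submatrix_one hπ]
  exact tvDist_le_of_coupling
    (exp_smul_apply_nonneg (fun _ _ => coupledVoterGen_apply_nonneg hq) ht)
    (hmarginal Prod.fst fun _ _ => rfl) (hmarginal Prod.snd fun _ _ => rfl) η ζ

end NoisyVoter

theorem sum_ite_mem_const {ι : Type*} [Fintype ι] [DecidableEq ι] (s : Finset ι) (a b : ℝ) :
    ∑ i, (if i ∈ s then a else b) = #s * a + (Fintype.card ι - #s) * b := by
  rw [sum_ite, sum_const, sum_const, filter_mem_eq_inter, univ_inter, filter_not,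
    filter_mem_eq_inter, univ_inter, card_sdiff_of_subset (subset_univ s), card_univ,
    nsmul_eq_mul, nsmul_eq_mul, Nat.cast_sub (card_le_univ s)]

-- Concavity of `x ↦ x^{1/4}`: its secant slope on `[x - 1, x]` is at least its derivative at `x`.
theorem rpow_quarter_le_mul_sub {x : ℝ} (hx : 1 ≤ x) :
    x ^ (1 / 4 : ℝ) ≤ 4 * x * (x ^ (1 / 4 : ℝ) - (x - 1) ^ (1 / 4 : ℝ)) := by
  set u := x ^ (1 / 4 : ℝ)
  set w := (x - 1) ^ (1 / 4 : ℝ)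
  have hu : 0 ≤ u := by positivity
  have hw : 0 ≤ w := Real.rpow_nonneg (by linarith) _
  have hu4 : u ^ 4 = x := by
    rw [← Real.rpow_natCast, ← Real.rpow_mul (by linarith)]; norm_num
  have hw4 : w ^ 4 = x - 1 := by
    rw [← Real.rpow_natCast, ← Real.rpow_mul (by linarith)]; norm_num
  have amgm : 4 * u ^ 3 * w ≤ 3 * u ^ 4 + w ^ 4 := by
    nlinarith [mul_nonneg (sq_nonneg (u - w)) (by positivity : 0 ≤ 3 * u ^ 2 + 2 * u * w + w ^ 2)]
  rw [← hu4]
  nlinarith [mul_nonneg hu hw]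

section Star

variable (n : ℕ)

def centerDisagrees (ω : (Option (Fin n) → Bool) × (Option (Fin n) → Bool)) : Bool :=
  ω.1 none != ω.2 none

def leafDisagreements (ω : (Option (Fin n) → Bool) × (Option (Fin n) → Bool)) : Finset (Fin n) :=
  univ.filter fun i => ω.1 (some i) ≠ ω.2 (some i)

def liftLumped (g : Bool → ℕ → ℝ) (ω : (Option (Fin n) → Bool) × (Option (Fin n) → Bool)) : ℝ :=
  g (centerDisagrees n ω) #(leafDisagreements n ω)

-- Generator of `(centerDisagrees, #leafDisagreements)` under the coupled dynamics. At `k = 0`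
-- the truncated `k - 1` is junk, but its coefficient is `k = 0`.
noncomputable def starLumpedGen (c : ℝ) (g : Bool → ℕ → ℝ) : Bool → ℕ → ℝ
  | false, k => c * k / n * (g true k - g false k) + (1 + c) * k * (g false (k - 1) - g false k)
  | true, k => (1 + c * (n - k) / n) * (g false k - g true k) + k * (g true (k - 1) - g true k)
      + c * (n - k) * (g true (k + 1) - g true k)

noncomputable def weightedDisagreement : Bool → ℕ → ℝ
  | false, k => k
  | true, k => n + k

noncomputable def rootDisagreement : Bool → ℕ → ℝ
  | false, k => (k : ℝ) ^ (1 / 4 : ℝ)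
  | true, k => -(16 * (n : ℝ) ^ (1 / 4 : ℝ) * k / n)

variable {n}

section Updates

variable (ω : (Option (Fin n) → Bool) × (Option (Fin n) → Bool)) (a b : Bool)

theorem centerDisagrees_update_none :
    centerDisagrees n (Function.update ω.1 none a, Function.update ω.2 none b) = (a != b) := by
  simp [centerDisagrees]

theorem leafDisagreements_update_none :
    leafDisagreements n (Function.update ω.1 none a, Function.update ω.2 none b)
      = leafDisagreements n ω := by
  simp [leafDisagreements]

theorem centerDisagrees_update_some (i : Fin n) :
    centerDisagrees n (Function.update ω.1 (some i) a, Function.update ω.2 (some i) b)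
      = centerDisagrees n ω := by
  simp [centerDisagrees]

theorem card_leafDisagreements_update_some (i : Fin n) :
    #(leafDisagreements n (Function.update ω.1 (some i) a, Function.update ω.2 (some i) b))
      = if a = b then #((leafDisagreements n ω).erase i)
        else #(insert i (leafDisagreements n ω)) := by
  split_ifs with hab <;> congr 1 <;> ext j <;> by_cases hj : j = i <;>
    simp [leafDisagreements, hj, hab, Function.update_apply]

end Updates

section LumpedSums

variable (g : Bool → ℕ → ℝ) (ω : (Option (Fin n) → Bool) × (Option (Fin n) → Bool))

theorem sum_apply_bne_some (k : ℕ) :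
    ∑ i, g (ω.1 (some i) != ω.2 (some i)) k
      = #(leafDisagreements n ω) * g true k + (n - #(leafDisagreements n ω)) * g false k := by
  rw [show (n : ℝ) = Fintype.card (Fin n) by simp, ← sum_ite_mem_const]
  refine sum_congr rfl fun i _ => ?_
  split_ifs with h <;> simp only [leafDisagreements, mem_filter, mem_univ, true_and] at h
  · rw [bne_iff_ne.mpr h]
  · rw [not_not] at h
    rw [h, bne_self_eq_false]

theorem sum_apply_card_erase (d : Bool) :
    ∑ i, g d #((leafDisagreements n ω).erase i)
      = #(leafDisagreements n ω) * g d (#(leafDisagreements n ω) - 1)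
        + (n - #(leafDisagreements n ω)) * g d #(leafDisagreements n ω) := by
  rw [show (n : ℝ) = Fintype.card (Fin n) by simp, ← sum_ite_mem_const]
  refine sum_congr rfl fun i _ => ?_
  split_ifs with h
  · rw [card_erase_of_mem h]
  · rw [erase_eq_of_notMem h]

theorem sum_apply_card_insert (d : Bool) :
    ∑ i, g d #(insert i (leafDisagreements n ω))
      = #(leafDisagreements n ω) * g d #(leafDisagreements n ω)
        + (n - #(leafDisagreements n ω)) * g d (#(leafDisagreements n ω) + 1) := by
  rw [show (n : ℝ) = Fintype.card (Fin n) by simp, ← sum_ite_mem_const]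
  refine sum_congr rfl fun i _ => ?_
  split_ifs with h
  · rw [insert_eq_of_mem h]
  · rw [card_insert_of_notMem h]

end LumpedSums

theorem coupledVoterGen_starQ_mulVec_liftLumped (c : ℝ) (g : Bool → ℕ → ℝ) :
    coupledVoterGen (fun x y => c * starQ n x y) *ᵥ liftLumped n g
      = liftLumped n (starLumpedGen n c g) := by
  funext ω
  rw [coupledVoterGen, jumpGen_mulVec]
  simp only [Fintype.sum_prod_type, Fintype.sum_option, Fintype.sum_sum_type, Fintype.sum_bool,
    liftLumped, voterEventRate, voterEventAct, starQ, Prod.map, centerDisagrees_update_none,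
    leafDisagreements_update_none, centerDisagrees_update_some,
    card_leafDisagreements_update_some, bne_self_eq_false, if_true, mul_zero, zero_mul,
    sum_const_zero, add_zero, mul_one, sum_add_distrib, ← mul_sum, sum_sub_distrib,
    sum_apply_bne_some, sum_apply_card_erase, sum_const, card_univ, Fintype.card_fin, nsmul_eq_mul,
    Fintype.card_bool, Fintype.card_option]
  by_cases hc : ω.1 none = ω.2 none
  · have hd : centerDisagrees n ω = false := by simp [centerDisagrees, hc]
    simp only [hc, hd, if_true, sum_apply_card_erase, starLumpedGen]
    push_cast
    ring
  · have hd : centerDisagrees n ω = true := by simpa [centerDisagrees] using hc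
    simp only [hc, hd, if_false, sum_apply_card_insert, starLumpedGen]
    push_cast
    ring

theorem starLumpedGen_weightedDisagreement (hn : n ≠ 0) (c : ℝ) (d : Bool) (k : ℕ) :
    starLumpedGen n c (weightedDisagreement n) d k = -weightedDisagreement n d k := by
  have hk : (k : ℝ) * (((k - 1 : ℕ) : ℝ) - k) = -k := by
    rcases Nat.eq_zero_or_pos k with rfl | hk
    · simp
    · rw [Nat.cast_sub hk]; ring
  cases d <;> simp only [starLumpedGen, weightedDisagreement] <;> field_simp <;> push_cast
  · linear_combination (1 + c) * n * hk
  · linear_combination n * hk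

theorem starLumpedGen_rootDisagreement_false (k : ℕ) :
    starLumpedGen n 15 (rootDisagreement n) false k ≤ -4 * rootDisagreement n false k := by
  simp only [starLumpedGen, rootDisagreement]
  rcases Nat.eq_zero_or_pos k with rfl | hk1
  · simp
  have hroot := rpow_quarter_le_mul_sub (x := k) (by exact_mod_cast hk1)
  have hcenter : 15 * k / n * (-(16 * (n : ℝ) ^ (1 / 4 : ℝ) * k / n) - (k : ℝ) ^ (1 / 4 : ℝ))
      ≤ 0 := by
    have : (0 : ℝ) ≤ 16 * (n : ℝ) ^ (1 / 4 : ℝ) * k / n := by positivity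
    exact mul_nonpos_of_nonneg_of_nonpos (by positivity)
      (by linarith [Real.rpow_nonneg (Nat.cast_nonneg k) (1 / 4 : ℝ)])
  rw [Nat.cast_sub hk1, Nat.cast_one]
  nlinarith

theorem starLumpedGen_rootDisagreement_true (hn : n ≠ 0) {k : ℕ} (hk : k ≤ n) :
    starLumpedGen n 15 (rootDisagreement n) true k ≤ -4 * rootDisagreement n true k := by
  have hnR : (0 : ℝ) < n := by positivity
  have hkn : (k : ℝ) ≤ n := by exact_mod_cast hk
  simp only [starLumpedGen, rootDisagreement]
  set x : ℝ := (n - k) / n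
  have hx0 : 0 ≤ x := div_nonneg (by linarith) hnR.le
  have hx1 : x ≤ 1 := (div_le_one hnR).mpr (by linarith)
  have hN : (0 : ℝ) ≤ (n : ℝ) ^ (1 / 4 : ℝ) := by positivity
  have hu : (k : ℝ) ^ (1 / 4 : ℝ) ≤ (n : ℝ) ^ (1 / 4 : ℝ) :=
    Real.rpow_le_rpow (Nat.cast_nonneg k) hkn (by norm_num)
  -- this is where the constant `16` in `rootDisagreement` comes from
  have hquad : 1 + 15 * x ≤ 16 * (15 * x ^ 2 - 2 * x + 2) := by
    nlinarith [sq_nonneg (x - 47 / 480)]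
  have hkey : (1 + 15 * x) * (k : ℝ) ^ (1 / 4 : ℝ)
      ≤ 16 * (n : ℝ) ^ (1 / 4 : ℝ) * (15 * x ^ 2 - 2 * x + 2) := by
    nlinarith [mul_le_mul_of_nonneg_right hu (by linarith : (0 : ℝ) ≤ 1 + 15 * x)]
  rcases Nat.eq_zero_or_pos k with rfl | hk1
  · simp [hnR.ne']
    positivity
  rw [Nat.cast_sub hk1, Nat.cast_one, ← sub_nonpos]
  have hexpand : (1 + 15 * (n - k) / n) * ((k : ℝ) ^ (1 / 4 : ℝ) - -(16 * n ^ (1 / 4 : ℝ) * k / n))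
      + k * (-(16 * n ^ (1 / 4 : ℝ) * (k - 1) / n) - -(16 * n ^ (1 / 4 : ℝ) * k / n))
      + 15 * (n - k) * (-(16 * n ^ (1 / 4 : ℝ) * ↑(k + 1) / n) - -(16 * n ^ (1 / 4 : ℝ) * k / n))
      - -4 * -(16 * n ^ (1 / 4 : ℝ) * k / n)
      = (1 + 15 * x) * (k : ℝ) ^ (1 / 4 : ℝ) - 16 * n ^ (1 / 4 : ℝ) * (15 * x ^ 2 - 2 * x + 2) := by
    simp only [x]
    field_simp
    push_cast
    ring
  linarith

theorem starQ_nonneg (x y : Option (Fin n)) : 0 ≤ starQ n x y := by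
  rcases x with _ | _ <;> rcases y with _ | _ <;> simp [starQ]

theorem card_leafDisagreements_le (ω : (Option (Fin n) → Bool) × (Option (Fin n) → Bool)) :
    #(leafDisagreements n ω) ≤ n :=
  (card_le_univ _).trans_eq (Fintype.card_fin n)

theorem eq_of_disagreements_empty {ω : (Option (Fin n) → Bool) × (Option (Fin n) → Bool)}
    (hcenter : centerDisagrees n ω = false) (hleaf : leafDisagreements n ω = ∅) : ω.1 = ω.2 := by
  funext x
  rcases x with _ | i
  · simpa [centerDisagrees] using hcenter
  · simpa [leafDisagreements, filter_eq_empty_iff] using congrArg (i ∈ ·) hleaf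

theorem offDiag_le_lyapunov (hn : n ≠ 0) (ω : (Option (Fin n) → Bool) × (Option (Fin n) → Bool)) :
    (if ω.1 = ω.2 then 0 else 1 : ℝ)
      ≤ (1 + 16 * (n : ℝ) ^ (1 / 4 : ℝ)) / n * liftLumped n (weightedDisagreement n) ω
        + liftLumped n (rootDisagreement n) ω := by
  have hnR : (0 : ℝ) < n := by positivity
  have hkn : (#(leafDisagreements n ω) : ℝ) ≤ n := by exact_mod_cast card_leafDisagreements_le ω
  simp only [liftLumped]
  cases hd : centerDisagrees n ω
  · simp only [weightedDisagreement, rootDisagreement]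
    split_ifs with h
    · positivity
    · have hleaf : (leafDisagreements n ω).Nonempty := by
        rw [nonempty_iff_ne_empty]
        exact fun hempty => h (eq_of_disagreements_empty hd hempty)
      have hk1 : (1 : ℝ) ≤ #(leafDisagreements n ω) := by exact_mod_cast hleaf.card_pos
      have := Real.one_le_rpow hk1 (by norm_num : (0 : ℝ) ≤ 1 / 4)
      have : (0 : ℝ) ≤ (1 + 16 * (n : ℝ) ^ (1 / 4 : ℝ)) / n * #(leafDisagreements n ω) := by
        positivity
      linarith
  · simp only [weightedDisagreement, rootDisagreement]
    have hsplit : (1 + 16 * (n : ℝ) ^ (1 / 4 : ℝ)) / n * (n + #(leafDisagreements n ω))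
        + -(16 * (n : ℝ) ^ (1 / 4 : ℝ) * #(leafDisagreements n ω) / n)
        = 1 + 16 * (n : ℝ) ^ (1 / 4 : ℝ) + #(leafDisagreements n ω) / n := by
      field_simp
      ring
    have : (0 : ℝ) ≤ 16 * (n : ℝ) ^ (1 / 4 : ℝ) + #(leafDisagreements n ω) / n := by positivity
    rw [hsplit]
    split_ifs <;> linarith

theorem weightedDisagreement_le (d : Bool) {k : ℕ} (hk : k ≤ n) :
    weightedDisagreement n d k ≤ 2 * n := by
  have hkn : (k : ℝ) ≤ n := by exact_mod_cast hk
  cases d <;> simp only [weightedDisagreement] <;> linarith [(Nat.cast_nonneg n : (0 : ℝ) ≤ n)]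

theorem rootDisagreement_le (d : Bool) {k : ℕ} (hk : k ≤ n) :
    rootDisagreement n d k ≤ (n : ℝ) ^ (1 / 4 : ℝ) := by
  cases d
  · exact Real.rpow_le_rpow (Nat.cast_nonneg k) (by exact_mod_cast hk) (by norm_num)
  · simp only [rootDisagreement]
    have : (0 : ℝ) ≤ 16 * (n : ℝ) ^ (1 / 4 : ℝ) * k / n := by positivity
    have : (0 : ℝ) ≤ (n : ℝ) ^ (1 / 4 : ℝ) := by positivity
    linarith

theorem tvDist_voterP_starQ_le (hn : n ≠ 0) {t : ℝ} (ht : 0 ≤ t) (η ζ : Option (Fin n) → Bool) :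
    tvDist (voterP (fun x y => 15 * starQ n x y) t η) (voterP (fun x y => 15 * starQ n x y) t ζ)
      ≤ Real.exp (-1 * t) * (2 * (1 + 16 * (n : ℝ) ^ (1 / 4 : ℝ)))
        + Real.exp (-4 * t) * (n : ℝ) ^ (1 / 4 : ℝ) := by
  set q : Option (Fin n) → Option (Fin n) → ℝ := fun x y => 15 * starQ n x y
  have hq : ∀ x y, 0 ≤ q x y := fun x y => mul_nonneg (by norm_num) (starQ_nonneg x y)
  set P₂ := NormedSpace.exp (t • coupledVoterGen q)
  set β : ℝ := (1 + 16 * (n : ℝ) ^ (1 / 4 : ℝ)) / n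
  set A := liftLumped n (weightedDisagreement n)
  set B := liftLumped n (rootDisagreement n)
  have hQ₂ : ∀ ω ω', ω ≠ ω' → 0 ≤ coupledVoterGen q ω ω' :=
    fun _ _ => coupledVoterGen_apply_nonneg hq
  have hP₂ : ∀ ω ω', 0 ≤ P₂ ω ω' := exp_smul_apply_nonneg hQ₂ ht
  have hA : (P₂ *ᵥ A) (η, ζ) ≤ Real.exp (-1 * t) * A (η, ζ) := by
    refine exp_smul_mulVec_le hQ₂ ht (fun ω => ?_) _
    rw [coupledVoterGen_starQ_mulVec_liftLumped]
    simp [A, liftLumped, starLumpedGen_weightedDisagreement hn]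
  have hB : (P₂ *ᵥ B) (η, ζ) ≤ Real.exp (-4 * t) * B (η, ζ) := by
    refine exp_smul_mulVec_le hQ₂ ht (fun ω => ?_) _
    rw [coupledVoterGen_starQ_mulVec_liftLumped]
    simp only [B, liftLumped]
    cases centerDisagrees n ω
    exacts [starLumpedGen_rootDisagreement_false _,
      starLumpedGen_rootDisagreement_true hn (card_leafDisagreements_le ω)]
  have hk := card_leafDisagreements_le (η, ζ)
  calc tvDist (voterP q t η) (voterP q t ζ)
      ≤ (P₂ *ᵥ fun ω => if ω.1 = ω.2 then 0 else 1) (η, ζ) := tvDist_voterP_le hq ht η ζ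
    _ ≤ (P₂ *ᵥ (β • A + B)) (η, ζ) :=
        mulVec_le_mulVec_of_nonneg hP₂ (offDiag_le_lyapunov hn) _
    _ = β * (P₂ *ᵥ A) (η, ζ) + (P₂ *ᵥ B) (η, ζ) := by
        rw [mulVec_add, mulVec_smul]; rfl
    _ ≤ β * (Real.exp (-1 * t) * (2 * n)) + Real.exp (-4 * t) * (n : ℝ) ^ (1 / 4 : ℝ) := by
        gcongr
        · exact hA.trans (by gcongr; exact weightedDisagreement_le _ hk)
        · exact hB.trans (by gcongr; exact rootDisagreement_le _ hk)
    _ = _ := by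
        simp only [β]
        field_simp

end Star

theorem mixing_bound_le_one_fourth {x : ℝ} (hx : 140 ^ 12 ≤ x) :
    Real.exp (-1 * (Real.log x / 3)) * (2 * (1 + 16 * x ^ (1 / 4 : ℝ)))
      + Real.exp (-4 * (Real.log x / 3)) * x ^ (1 / 4 : ℝ) ≤ 1 / 4 := by
  have hx0 : 0 < x := lt_of_lt_of_le (by norm_num) hx
  -- with `r = x^{-1/12} ≤ 1/140` the left side is `2 r^4 + 32 r + r^13 ≤ 35 r`
  set r := Real.exp (-(Real.log x / 12))
  have hr0 : 0 < r := Real.exp_pos _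
  have hr : r ≤ 1 / 140 := by
    have hlog : Real.log (140 ^ 12) ≤ Real.log x := Real.log_le_log (by norm_num) hx
    rw [Real.log_pow] at hlog
    calc r ≤ Real.exp (-Real.log 140) := Real.exp_le_exp.mpr (by push_cast at hlog; linarith)
      _ = 1 / 140 := by rw [Real.exp_neg, Real.exp_log (by norm_num), one_div]
  have h4 : Real.exp (-1 * (Real.log x / 3)) = r ^ 4 := by
    rw [← Real.exp_nat_mul]; ring_nf
  have h16 : Real.exp (-4 * (Real.log x / 3)) = r ^ 16 := by
    rw [← Real.exp_nat_mul]; ring_nf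
  have hroot : x ^ (1 / 4 : ℝ) * r ^ 3 = 1 := by
    rw [Real.rpow_def_of_pos hx0, ← Real.exp_nat_mul, ← Real.exp_add, Real.exp_eq_one_iff]
    ring
  have hr4 : r ^ 4 ≤ r := pow_le_of_le_one hr0.le (by linarith) (by norm_num)
  have hr13 : r ^ 13 ≤ r := pow_le_of_le_one hr0.le (by linarith) (by norm_num)
  rw [h4, h16]
  linear_combination (32 * r + r ^ 13) * hroot + 2 * hr4 + hr13 + 35 * hr

/-- **The `n`-star counterexample of Cox–Peres–Steif.** There is a constant `c > 0` such that
for all large `n`, the noisy voter model on the `n`-star with voting rates sped up by `c`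
(i.e. `q(leaf, center) = c`, `q(center, leaf) = c/n`) has mixing time at most `(log n)/3`,
which is strictly smaller than `(1/2) log n`; the cutoff lower bound of the main theorem can
thus fail when the stationary distributions of the voting chains are far from uniform. -/
theorem stmt_16 :
    ∃ c : ℝ, 0 < c ∧ ∃ N : ℕ, ∀ n : ℕ, N ≤ n →
      ∀ μinf : (Option (Fin n) → Bool) → ℝ,
        IsStationaryNVM (fun x y => c * starQ n x y) μinf →
          (⨆ η : Option (Fin n) → Bool,
            tvDist (voterP (fun x y => c * starQ n x y) (Real.log n / 3) η) μinf) ≤ 1 / 4 := by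
  refine ⟨15, by norm_num, 140 ^ 12, fun n hN μ ⟨hμ₀, hμ₁, hμQ⟩ => ?_⟩
  have hn : n ≠ 0 := (lt_of_lt_of_le (by norm_num) hN).ne'
  have hx : (140 : ℝ) ^ 12 ≤ n := by exact_mod_cast hN
  have ht : 0 ≤ Real.log n / 3 := div_nonneg (Real.log_nonneg (by linarith)) (by norm_num)
  have hstat : μ ᵥ* voterP (fun x y => 15 * starQ n x y) (Real.log n / 3) = μ := by
    refine vecMul_exp_eq_self ?_
    rw [vecMul_smul, show μ ᵥ* voterGen _ = 0 from funext hμQ, smul_zero]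
  refine ciSup_le fun η => ?_
  exact (tvDist_le_of_vecMul_eq_self hμ₀ hμ₁ hstat fun ζ => tvDist_voterP_starQ_le hn ht η ζ).trans
    (mixing_bound_le_one_fourth hx)
end
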